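/- arXiv:1708.03077 — 3 statements merged into one kernel-verified Lean document; each statement's English description precedes it below -/
import Mathlib

section
/- Let (G₁,σ₁) and (G₂,σ₂) be balanced signed graphs with σ₁(e) = σ₂(e) for every edge e ∈ E(G₁) ∩ E(G₂), and let G = G₁ ∪ G₂ carry the signature σ with σ(e) = σ₁(e) for e ∈ E(G₁) and σ(e) = σ₂(e) for e ∈ E(G₂). Suppose G₁ ∩ G₂ is a complete graph K₃ on three vertices (a triangle). If c₁ and c₂ are signed tree-colorings of (G₁,σ₁) and (G₂,σ₂) respectively with c₁(v) = c₂(v) for every v ∈ V(G₁) ∩ V(G₂), then the common extension c of c₁ and c₂ is a signed tree-coloring of (G,σ). -/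
/-- The color set `M n`: `{±1, …, ±k}` if `n = 2k`, and `{0, ±1, …, ±k}` if `n = 2k+1`. -/
def Mset (n : ℕ) : Set ℤ :=
  {j : ℤ | j.natAbs ≤ n / 2 ∧ (n % 2 = 0 → j ≠ 0)}

/-- `σ` is a signature of the graph `G`: every edge gets sign `1` or `-1`. -/
def IsSignature {V : Type*} (G : SimpleGraph V) (σ : Sym2 V → ℤ) : Prop :=
  ∀ e ∈ G.edgeSet, σ e = 1 ∨ σ e = -1

/-- The monochromatic subgraph `G^c(i, ±)`: its edges are the edges `uv` of `G` with
`c u = σ(uv) * c v` (stated symmetrically) whose endpoints are colored `i` or `-i`. -/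
def signedSubgraph {V : Type*} (G : SimpleGraph V) (σ : Sym2 V → ℤ)
    (c : V → ℤ) (i : ℤ) : SimpleGraph V where
  Adj u v := G.Adj u v ∧ (c u = σ s(u, v) * c v ∨ c v = σ s(u, v) * c u) ∧
    (c u = i ∨ c u = -i) ∧ (c v = i ∨ c v = -i)
  symm := ⟨by
    rintro u v ⟨h1, h2, h3, h4⟩
    exact ⟨h1.symm, by rw [Sym2.eq_swap]; exact h2.symm, h4, h3⟩⟩
  loopless := ⟨fun u ⟨h, _⟩ => G.irrefl h⟩

/-- A signed tree-coloring: every monochromatic subgraph `G^c(c u, ±)` is a forest. -/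
def IsSignedTreeColoring {V : Type*} (G : SimpleGraph V) (σ : Sym2 V → ℤ)
    (c : V → ℤ) : Prop :=
  ∀ u : V, (signedSubgraph G σ c (c u)).IsAcyclic

/-- A signed tree-`n`-coloring: a signed tree-coloring with colors in `M n`. -/
def IsSignedTreeNColoring {V : Type*} (G : SimpleGraph V) (σ : Sym2 V → ℤ)
    (n : ℕ) (c : V → ℤ) : Prop :=
  (∀ v, c v ∈ Mset n) ∧ IsSignedTreeColoring G σ c

/-- The signed vertex arboricity: the least `n` admitting a signed tree-`n`-coloring. -/
noncomputable def signedVertexArboricity {V : Type*} (G : SimpleGraph V)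
    (σ : Sym2 V → ℤ) : ℕ :=
  sInf {n : ℕ | ∃ c : V → ℤ, IsSignedTreeNColoring G σ n c}

/-- A signed graph is balanced if every cycle contains an even number of negative edges. -/
def IsBalanced {V : Type*} (G : SimpleGraph V) (σ : Sym2 V → ℤ) : Prop :=
  ∀ ⦃u : V⦄ (w : G.Walk u u), w.IsCycle →
    Even (List.countP (fun e => decide (σ e = -1)) w.edges)

/-- `G` has a `K₅` minor: five pairwise disjoint nonempty connected branch sets with
an edge of `G` between any two of them. -/
def HasK5Minor {V : Type*} (G : SimpleGraph V) : Prop :=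
  ∃ W : Fin 5 → Set V,
    (∀ i, (W i).Nonempty) ∧
    (Pairwise fun i j => Disjoint (W i) (W j)) ∧
    (∀ i, (G.induce (W i)).Connected) ∧
    (Pairwise fun i j => ∃ u ∈ W i, ∃ v ∈ W j, G.Adj u v)

/-- `G` is edge-maximal `K₅`-minor-free. -/
def EdgeMaximalK5MinorFree {V : Type*} (G : SimpleGraph V) : Prop :=
  ¬ HasK5Minor G ∧ ∀ u v : V, u ≠ v → ¬ G.Adj u v →
    HasK5Minor (G ⊔ SimpleGraph.fromEdgeSet {s(u, v)})

/-- An (unsigned) tree-`k`-coloring: colors in `{1, …, k}`, each class inducing a forest. -/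
def IsTreeColoring {V : Type*} (G : SimpleGraph V) (k : ℕ) (φ : V → ℕ) : Prop :=
  (∀ v, φ v ∈ Finset.Icc 1 k) ∧ ∀ i : ℕ, (G.induce (φ ⁻¹' {i})).IsAcyclic

/-- The (unsigned) vertex arboricity: the least `k` admitting a tree-`k`-coloring. -/
noncomputable def vertexArboricity {V : Type*} (G : SimpleGraph V) : ℕ :=
  sInf {k : ℕ | ∃ φ : V → ℕ, IsTreeColoring G k φ}

namespace StmtAux
open SimpleGraph Walk
variable {V : Type*}


lemma end_mem_tail {G : SimpleGraph V} {a b : V} (p : G.Walk a b) (h : ¬p.Nil) :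
    b ∈ p.support.tail := by
  cases p with
  | nil => exact absurd Walk.Nil.nil h
  | cons h2 q => simpa using q.end_mem_support

lemma not_nil_transfer {G H : SimpleGraph V} {a b : V} (p : G.Walk a b) (hp)
    (h : ¬p.Nil) : ¬(p.transfer H hp).Nil := by
  rw [Walk.nil_iff_length_eq, Walk.length_transfer]
  rwa [Walk.nil_iff_length_eq] at h

lemma length_eq_one_of_mem_edges {G : SimpleGraph V} {a b : V} (p : G.Walk a b)
    (hp : p.IsPath) (he : s(a, b) ∈ p.edges) : p.length = 1 := by
  induction p with
  | nil => simp at he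
  | @cons a a'' b h q ih =>
    rw [Walk.edges_cons, List.mem_cons] at he
    rcases he with he | he
    · rw [Sym2.eq_iff] at he
      rcases he with ⟨-, rfl⟩ | ⟨h1, rfl⟩
      · cases q with
        | nil => rfl
        | cons h2 r =>
          exfalso
          have := (Walk.cons_isPath_iff _ _).1 ((Walk.cons_isPath_iff _ _).1 hp).1
          exact this.2 r.end_mem_support
      · exact absurd h1 h.ne
    · exact absurd (q.fst_mem_support_of_mem_edges he)
        ((Walk.cons_isPath_iff _ _).1 hp).2

lemma prod_map_eq_pow {σ : Sym2 V → ℤ} : ∀ (l : List (Sym2 V)),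
    (∀ e ∈ l, σ e = 1 ∨ σ e = -1) →
    (l.map σ).prod = (-1) ^ (l.countP (fun e => decide (σ e = -1)))
  | [], _ => by simp
  | e :: t, h => by
    have ht := prod_map_eq_pow t (fun e' he' => h e' (List.mem_cons_of_mem _ he'))
    rcases h e (List.mem_cons_self) with he | he <;>
      simp [List.countP_cons, he, ht, pow_succ, mul_comm]

lemma pigeon {α : Type*} {x y z a b c d : α}
    (ha : a = x ∨ a = y ∨ a = z) (hb : b = x ∨ b = y ∨ b = z)
    (hc : c = x ∨ c = y ∨ c = z) (hd : d = x ∨ d = y ∨ d = z)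
    (hab : a ≠ b) (hac : a ≠ c) (had : a ≠ d) (hbc : b ≠ c) (hbd : b ≠ d)
    (hcd : c ≠ d) : False := by
  rcases ha with rfl | rfl | rfl <;> rcases hb with rfl | rfl | rfl <;>
    rcases hc with rfl | rfl | rfl <;> rcases hd with rfl | rfl | rfl <;> simp_all

lemma signedSubgraph_neg {G : SimpleGraph V} {σ : Sym2 V → ℤ} {c : V → ℤ} {i : ℤ} :
    signedSubgraph G σ c (-i) = signedSubgraph G σ c i := by
  ext u v
  constructor <;> rintro ⟨h1, h2, h3, h4⟩ <;> refine ⟨h1, h2, ?_, ?_⟩ <;>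
    simp only [neg_neg] at h3 h4 ⊢ <;> tauto

lemma acyclic_all {G : SimpleGraph V} {σ : Sym2 V → ℤ} {c : V → ℤ}
    (h : IsSignedTreeColoring G σ c) (i : ℤ) : (signedSubgraph G σ c i).IsAcyclic := by
  intro a w hw
  have hca : c a = i ∨ c a = -i := by
    cases w with
    | nil => exact absurd rfl hw.ne_nil
    | cons hadj p => exact hadj.2.2.1
  have e : signedSubgraph G σ c i = signedSubgraph G σ c (c a) := by
    rcases hca with h' | h'
    · rw [h']
    · rw [h', signedSubgraph_neg]
  exact h a (w.transfer _ (fun e' he' => e ▸ w.edges_subset_edgeSet he'))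
    (hw.transfer _)

lemma walk_colors {G : SimpleGraph V} {σ : Sym2 V → ℤ} {c : V → ℤ} {i : ℤ} {a b : V}
    (p : (signedSubgraph G σ c i).Walk a b) (h : ¬p.Nil) :
    (c a = i ∨ c a = -i) ∧ (c b = i ∨ c b = -i) := by
  induction p with
  | nil => exact absurd Walk.Nil.nil h
  | @cons a a' b hadj q ih =>
    refine ⟨hadj.2.2.1, ?_⟩
    by_cases hq : q.Nil
    · have := hq.eq; subst this; exact hadj.2.2.2
    · exact (ih hq).2

lemma walk_color_prod {G : SimpleGraph V} {σ : Sym2 V → ℤ} {c : V → ℤ} {i : ℤ}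
    (hsig : IsSignature G σ) : ∀ {a b : V} (p : (signedSubgraph G σ c i).Walk a b),
    c a = (p.edges.map σ).prod * c b := by
  intro a b p
  induction p with
  | nil => simp
  | @cons a a' b hadj q ih =>
    have hedge : σ s(a, a') = 1 ∨ σ s(a, a') = -1 :=
      hsig _ ((SimpleGraph.mem_edgeSet G).2 hadj.1)
    have hstep : c a = σ s(a, a') * c a' := by
      rcases hadj.2.1 with h' | h'
      · exact h'
      · rcases hedge with he | he <;> rw [he] at h' ⊢ <;> linarith
    rw [Walk.edges_cons, List.map_cons, List.prod_cons, mul_assoc, ← ih, hstep]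

lemma signedSubgraph_le {G : SimpleGraph V} {σ : Sym2 V → ℤ} {c : V → ℤ} {i : ℤ} :
    signedSubgraph G σ c i ≤ G := fun _ _ h => h.1

lemma ends_mem {H G : SimpleGraph V} {VS : Set V} (hle : H ≤ G)
    (hV : ∀ ⦃x y : V⦄, G.Adj x y → x ∈ VS) :
    ∀ {a b : V} (p : H.Walk a b), ¬p.Nil → a ∈ VS ∧ b ∈ VS := by
  intro a b p
  induction p with
  | nil => exact fun h => absurd Walk.Nil.nil h
  | @cons a a' b hadj q ih =>
    intro _
    refine ⟨hV (hle hadj), ?_⟩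
    by_cases hq : q.Nil
    · have := hq.eq; subst this; exact hV (hle hadj).symm
    · exact (ih hq).2

lemma shortcut_contra {G : SimpleGraph V} {σ : Sym2 V → ℤ} {c : V → ℤ} {i : ℤ}
    (hsig : IsSignature G σ) (hbal : IsBalanced G σ)
    (hac : (signedSubgraph G σ c i).IsAcyclic)
    {a b : V} (hadj : G.Adj a b)
    (P : (signedSubgraph G σ c i).Walk a b) (hP : P.IsPath) (hPn : ¬P.Nil)
    (he : s(a, b) ∉ P.edges) : False := by
  have hsub : ∀ e ∈ P.edges, e ∈ G.edgeSet := fun e he' =>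
    SimpleGraph.edgeSet_mono signedSubgraph_le (P.edges_subset_edgeSet he')
  set Pt := P.transfer G hsub with hPt
  have hePt : Pt.edges = P.edges := P.edges_transfer hsub
  have hγ : (Walk.cons hadj.symm Pt).IsCycle := by
    refine SimpleGraph.Path.cons_isCycle ⟨Pt, hP.transfer hsub⟩ hadj.symm ?_
    rw [hePt]; rwa [Sym2.eq_swap] at he
  have heven := hbal _ hγ
  have hγe : (Walk.cons hadj.symm Pt).edges = s(b, a) :: P.edges := by
    rw [Walk.edges_cons, hePt]
  have hallG : ∀ e ∈ (Walk.cons hadj.symm Pt).edges, σ e = 1 ∨ σ e = -1 :=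
    fun e he' => hsig e ((Walk.cons hadj.symm Pt).edges_subset_edgeSet he')
  have hprod : (((Walk.cons hadj.symm Pt).edges).map σ).prod = 1 := by
    rw [prod_map_eq_pow _ hallG]
    exact heven.neg_one_pow
  have hba : σ s(b, a) = 1 ∨ σ s(b, a) = -1 :=
    hsig _ ((SimpleGraph.mem_edgeSet G).2 hadj.symm)
  rw [hγe, List.map_cons, List.prod_cons] at hprod
  have hPe : (P.edges.map σ).prod = σ s(a, b) := by
    rw [Sym2.eq_swap (a := a)]
    rcases hba with h' | h' <;> rw [h'] at hprod ⊢ <;> linarith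
  have hcompat : c a = σ s(a, b) * c b := by
    have := walk_color_prod (c := c) (i := i) hsig P
    rwa [hPe] at this
  obtain ⟨hca, hcb⟩ := walk_colors P hPn
  have hHadj : (signedSubgraph G σ c i).Adj a b := ⟨hadj, Or.inl hcompat, hca, hcb⟩
  refine hac (Walk.cons hHadj.symm P) ?_
  refine SimpleGraph.Path.cons_isCycle ⟨P, hP⟩ hHadj.symm ?_
  rwa [Sym2.eq_swap] at he

lemma two_paths_contra {Ga Gb : SimpleGraph V} {σ : Sym2 V → ℤ} {c : V → ℤ} {i : ℤ}
    (hsigA : IsSignature Ga σ) (hbalA : IsBalanced Ga σ)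
    (hacA : (signedSubgraph Ga σ c i).IsAcyclic)
    (hsigB : IsSignature Gb σ) (hbalB : IsBalanced Gb σ)
    (hacB : (signedSubgraph Gb σ c i).IsAcyclic)
    {a b : V} (hadjA : Ga.Adj a b) (hadjB : Gb.Adj a b)
    (P : (signedSubgraph Ga σ c i).Walk a b) (hP : P.IsPath)
    (Q : (signedSubgraph Gb σ c i).Walk b a) (hQ : Q.IsPath)
    (hlen : 3 ≤ P.length + Q.length) : False := by
  by_cases h2 : 2 ≤ P.length
  · have hPn : ¬P.Nil := by rw [Walk.nil_iff_length_eq]; omega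
    exact shortcut_contra hsigA hbalA hacA hadjA P hP hPn
      (fun hmem => by have := length_eq_one_of_mem_edges P hP hmem; omega)
  · have h2Q : 2 ≤ Q.length := by omega
    have hQn : ¬Q.Nil := by rw [Walk.nil_iff_length_eq]; omega
    exact shortcut_contra hsigB hbalB hacB hadjB.symm Q hQ hQn
      (fun hmem => by have := length_eq_one_of_mem_edges Q hQ hmem; omega)

lemma run_split {S : SimpleGraph V} (P : Sym2 V → Prop) {a' b : V} (p : S.Walk a' b) :
    ∀ {a : V} (h : S.Adj a a'), P s(a, a') →
      (∀ e ∈ (Walk.cons h p).edges, P e) ∨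
      ∃ (s s' : V) (q : S.Walk a s) (h' : S.Adj s s') (r : S.Walk s' b),
        Walk.cons h p = q.append (Walk.cons h' r) ∧ (∀ e ∈ q.edges, P e) ∧
        ¬q.Nil ∧ ¬P s(s, s') := by
  induction p with
  | nil =>
    intro a h hP
    left
    intro e he
    simp only [Walk.edges_cons, Walk.edges_nil, List.mem_singleton] at he
    rwa [he]
  | @cons a' v' b h₂ p' ih =>
    intro a h hP
    by_cases hP2 : P s(a', v')
    · rcases ih h₂ hP2 with hall | ⟨s, s', q, h', r, heq, hq, hqn, hns⟩
      · left
        intro e he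
        rw [Walk.edges_cons, List.mem_cons] at he
        rcases he with rfl | he
        · exact hP
        · exact hall e he
      · right
        refine ⟨s, s', Walk.cons h q, h', r, ?_, ?_, Walk.not_nil_cons, hns⟩
        · rw [Walk.cons_append, ← heq]
        · intro e he
          rw [Walk.edges_cons, List.mem_cons] at he
          rcases he with rfl | he
          · exact hP
          · exact hq e he
    · right
      exact ⟨a', v', Walk.cons h Walk.nil, h₂, p',
        by rw [Walk.cons_append, Walk.nil_append],
        fun e he => by
          simp only [Walk.edges_cons, Walk.edges_nil, List.mem_singleton] at he
          rwa [he],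
        Walk.not_nil_cons, hP2⟩

lemma peel {Ga Gb : SimpleGraph V} {Va Vb : Set V}
    (hVa : ∀ ⦃x y : V⦄, Ga.Adj x y → x ∈ Va) (hVb : ∀ ⦃x y : V⦄, Gb.Adj x y → x ∈ Vb)
    {σ : Sym2 V → ℤ} {c : V → ℤ} {i : ℤ}
    (hsigA : IsSignature Ga σ) (hsigB : IsSignature Gb σ)
    (hbalA : IsBalanced Ga σ) (hbalB : IsBalanced Gb σ)
    (hacA : (signedSubgraph Ga σ c i).IsAcyclic)
    (hacB : (signedSubgraph Gb σ c i).IsAcyclic)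
    {x y z : V} (hK3verts : Va ∩ Vb = {x, y, z})
    (hK3a : Ga.Adj x y ∧ Ga.Adj y z ∧ Ga.Adj x z)
    (hK3b : Gb.Adj x y ∧ Gb.Adj y z ∧ Gb.Adj x z)
    {S : SimpleGraph V}
    (hS : ∀ u v : V, S.Adj u v ↔
      (signedSubgraph Ga σ c i).Adj u v ∨ (signedSubgraph Gb σ c i).Adj u v)
    {v v₁ : V} (h : S.Adj v v₁) (p : S.Walk v₁ v)
    (hw : (Walk.cons h p).IsCycle)
    (hfirst : (signedSubgraph Ga σ c i).Adj v v₁) : False := by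
  set Ha := signedSubgraph Ga σ c i with hHadef
  set Hb := signedSubgraph Gb σ c i with hHbdef
  have hT : ∀ {a : V}, a ∈ Va → a ∈ Vb → (a = x ∨ a = y ∨ a = z) := by
    intro a h1 h2
    have : a ∈ Va ∩ Vb := ⟨h1, h2⟩
    rw [hK3verts] at this
    simpa [Set.mem_insert_iff] using this
  have tri : ∀ {a b : V}, (a = x ∨ a = y ∨ a = z) → (b = x ∨ b = y ∨ b = z) → a ≠ b →
      Ga.Adj a b ∧ Gb.Adj a b := by
    intro a b ha hb hne
    obtain ⟨hA1, hA2, hA3⟩ := hK3a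
    obtain ⟨hB1, hB2, hB3⟩ := hK3b
    rcases ha with rfl | rfl | rfl <;> rcases hb with rfl | rfl | rfl <;>
      first
        | exact absurd rfl hne
        | exact ⟨hA1, hB1⟩ | exact ⟨hA2, hB2⟩ | exact ⟨hA3, hB3⟩
        | exact ⟨hA1.symm, hB1.symm⟩ | exact ⟨hA2.symm, hB2.symm⟩
        | exact ⟨hA3.symm, hB3.symm⟩
  rcases run_split (fun e => e ∈ Ha.edgeSet) p h ((SimpleGraph.mem_edgeSet Ha).2 hfirst) with
    hall | ⟨j₁, s₁, q₁, h₁', r₁, heq₁, hq₁, hq₁n, hns₁⟩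
  · exact hacA _ (hw.transfer hall)
  have hfb₁ : Hb.Adj j₁ s₁ :=
    ((hS _ _).1 h₁').resolve_left (fun hA => hns₁ ((SimpleGraph.mem_edgeSet Ha).2 hA))
  have hwa : (q₁.append (Walk.cons h₁' r₁)).IsCycle := heq₁ ▸ hw
  have hlen3 : 3 ≤ q₁.length + (Walk.cons h₁' r₁).length := by
    have h3 := hw.three_le_length
    rw [heq₁, Walk.length_append] at h3
    exact h3
  have hj₁t : j₁ ∈ q₁.support.tail := end_mem_tail q₁ hq₁n
  rcases run_split (fun e => e ∈ Hb.edgeSet) r₁ h₁' ((SimpleGraph.mem_edgeSet Hb).2 hfb₁) with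
    hall₂ | ⟨j₂, s₂, q₂, h₂', r₂, heq₂, hq₂, hq₂n, hns₂⟩
  · -- exactly two runs
    set R₁ := Walk.cons h₁' r₁ with hR₁def
    have hnodup : (q₁.support.tail ++ R₁.support.tail).Nodup := by
      have hn := hwa.support_nodup
      rwa [Walk.tail_support_append] at hn
    have hdisj : q₁.support.tail.Disjoint R₁.support.tail :=
      List.disjoint_of_nodup_append hnodup
    have hvt : v ∈ R₁.support.tail := end_mem_tail R₁ Walk.not_nil_cons
    have hvj₁ : v ≠ j₁ := fun hEq => hdisj hj₁t (hEq ▸ hvt)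
    have hq₁path : q₁.IsPath := by
      rw [Walk.isPath_def, q₁.support_eq_cons, List.nodup_cons]
      exact ⟨fun hv' => hdisj hv' hvt, (List.nodup_append.1 hnodup).1⟩
    have hR₁path : R₁.IsPath := by
      rw [Walk.isPath_def, R₁.support_eq_cons, List.nodup_cons]
      exact ⟨hdisj hj₁t, (List.nodup_append.1 hnodup).2.1⟩
    have hmemA := ends_mem signedSubgraph_le hVa (q₁.transfer Ha hq₁)
      (not_nil_transfer _ _ hq₁n)
    have hmemB := ends_mem signedSubgraph_le hVb (R₁.transfer Hb hall₂)
      (not_nil_transfer _ _ Walk.not_nil_cons)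
    have hvT := hT hmemA.1 hmemB.2
    have hj₁T := hT hmemA.2 hmemB.1
    obtain ⟨hGa, hGb⟩ := tri hvT hj₁T hvj₁
    exact two_paths_contra hsigA hbalA hacA hsigB hbalB hacB hGa hGb
      (q₁.transfer Ha hq₁) (hq₁path.transfer _)
      (R₁.transfer Hb hall₂) (hR₁path.transfer _)
      (by rw [Walk.length_transfer, Walk.length_transfer]; exact hlen3)
  have hfa₂ : Ha.Adj j₂ s₂ :=
    ((hS _ _).1 h₂').resolve_right (fun hB => hns₂ ((SimpleGraph.mem_edgeSet Hb).2 hB))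
  set R₂ := Walk.cons h₂' r₂ with hR₂def
  have heqw : Walk.cons h p = q₁.append (q₂.append R₂) := by rw [heq₁, heq₂]
  have hnodup₂ : (q₁.support.tail ++ (q₂.support.tail ++ R₂.support.tail)).Nodup := by
    have hn := hw.support_nodup
    rwa [heqw, Walk.tail_support_append, Walk.tail_support_append] at hn
  rw [List.nodup_append'] at hnodup₂
  obtain ⟨hn₁, hn₂₃, hd₁⟩ := hnodup₂
  rw [List.nodup_append'] at hn₂₃
  obtain ⟨hn₂, hn₃, hd₂₃⟩ := hn₂₃
  have hj₂t : j₂ ∈ q₂.support.tail := end_mem_tail q₂ hq₂n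
  have hj₁j₂ : j₁ ≠ j₂ := fun hEq => hd₁ hj₁t (List.mem_append_left _ (hEq ▸ hj₂t))
  have hmemq₁ := ends_mem signedSubgraph_le hVa (q₁.transfer Ha hq₁)
    (not_nil_transfer _ _ hq₁n)
  have hmemq₂ := ends_mem signedSubgraph_le hVb (q₂.transfer Hb hq₂)
    (not_nil_transfer _ _ hq₂n)
  have hj₁T := hT hmemq₁.2 hmemq₂.1
  have hj₂T := hT (hVa hfa₂.1) hmemq₂.2
  rcases run_split (fun e => e ∈ Ha.edgeSet) r₂ h₂' ((SimpleGraph.mem_edgeSet Ha).2 hfa₂) with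
    hall₃ | ⟨j₃, s₃, q₃, h₃', r₃, heq₃, hq₃, hq₃n, hns₃⟩
  · -- three runs; merge the third with the first across the base vertex
    have hMedges : ∀ e ∈ (R₂.append q₁).edges, e ∈ Ha.edgeSet := by
      intro e he
      rw [Walk.edges_append, List.mem_append] at he
      rcases he with he | he
      · exact hall₃ e he
      · exact hq₁ e he
    have hMpath : (R₂.append q₁).IsPath := by
      rw [Walk.isPath_def, Walk.support_append, R₂.support_eq_cons, List.cons_append,
        List.nodup_cons]
      constructor
      · intro hmem
        rw [List.mem_append] at hmem
        rcases hmem with hm | hm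
        · exact hd₂₃ hj₂t hm
        · exact hd₁ hm (List.mem_append_left _ hj₂t)
      · rw [List.nodup_append']
        exact ⟨hn₃, hn₁, fun a ha hb => hd₁ hb (List.mem_append_right _ ha)⟩
    have hq₂path : q₂.IsPath := by
      rw [Walk.isPath_def, q₂.support_eq_cons, List.nodup_cons]
      exact ⟨fun hmem => hd₁ hj₁t (List.mem_append_left _ hmem), hn₂⟩
    have hlen' : 3 ≤ (R₂.append q₁).length + q₂.length := by
      have h1 : 0 < q₁.length := Walk.not_nil_iff_lt_length.1 hq₁n
      have h2 : 0 < q₂.length := Walk.not_nil_iff_lt_length.1 hq₂n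
      have h3 : 0 < R₂.length := Walk.not_nil_iff_lt_length.1 Walk.not_nil_cons
      rw [Walk.length_append]
      omega
    obtain ⟨hGa, hGb⟩ := tri hj₂T hj₁T (Ne.symm hj₁j₂)
    exact two_paths_contra hsigA hbalA hacA hsigB hbalB hacB hGa hGb
      ((R₂.append q₁).transfer Ha hMedges) (hMpath.transfer _)
      (q₂.transfer Hb hq₂) (hq₂path.transfer _)
      (by rw [Walk.length_transfer, Walk.length_transfer]; exact hlen')
  have hfb₃ : Hb.Adj j₃ s₃ :=
    ((hS _ _).1 h₃').resolve_left (fun hA => hns₃ ((SimpleGraph.mem_edgeSet Ha).2 hA))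
  set R₃ := Walk.cons h₃' r₃ with hR₃def
  have heqw₂ : Walk.cons h p = q₁.append (q₂.append (q₃.append R₃)) := by
    rw [heqw, hR₂def, heq₃]
  have hnodup₃ :
      (q₁.support.tail ++ (q₂.support.tail ++ (q₃.support.tail ++ R₃.support.tail))).Nodup := by
    have hn := hw.support_nodup
    rwa [heqw₂, Walk.tail_support_append, Walk.tail_support_append,
      Walk.tail_support_append] at hn
  rw [List.nodup_append'] at hnodup₃
  obtain ⟨gn₁, gn₂₃₄, gd₁⟩ := hnodup₃
  rw [List.nodup_append'] at gn₂₃₄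
  obtain ⟨gn₂, gn₃₄, gd₂⟩ := gn₂₃₄
  rw [List.nodup_append'] at gn₃₄
  obtain ⟨gn₃, gn₄, gd₃⟩ := gn₃₄
  have hj₃t : j₃ ∈ q₃.support.tail := end_mem_tail q₃ hq₃n
  have hmemq₃ := ends_mem signedSubgraph_le hVa (q₃.transfer Ha hq₃)
    (not_nil_transfer _ _ hq₃n)
  have hj₃T := hT hmemq₃.2 (hVb hfb₃.1)
  have hj₁j₃ : j₁ ≠ j₃ := fun hEq =>
    gd₁ hj₁t (List.mem_append_right _ (List.mem_append_left _ (hEq ▸ hj₃t)))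
  have hj₂j₃ : j₂ ≠ j₃ := fun hEq => gd₂ hj₂t (List.mem_append_left _ (hEq ▸ hj₃t))
  rcases run_split (fun e => e ∈ Hb.edgeSet) r₃ h₃' ((SimpleGraph.mem_edgeSet Hb).2 hfb₃) with
    hall₄ | ⟨j₄, s₄, q₄, h₄', r₄, heq₄, hq₄, hq₄n, hns₄⟩
  · -- four runs: the base vertex is a fourth junction
    have hmemR₃ := ends_mem signedSubgraph_le hVb (R₃.transfer Hb hall₄)
      (not_nil_transfer _ _ Walk.not_nil_cons)
    have hvT := hT hmemq₁.1 hmemR₃.2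
    have hvt : v ∈ R₃.support.tail := end_mem_tail R₃ Walk.not_nil_cons
    have hvj₁ : j₁ ≠ v := fun hEq =>
      gd₁ hj₁t (List.mem_append_right _ (List.mem_append_right _ (hEq ▸ hvt)))
    have hvj₂ : j₂ ≠ v := fun hEq => gd₂ hj₂t (List.mem_append_right _ (hEq ▸ hvt))
    have hvj₃ : j₃ ≠ v := fun hEq => gd₃ hj₃t (hEq ▸ hvt)
    exact pigeon hj₁T hj₂T hj₃T hvT hj₁j₂ hj₁j₃ hvj₁ hj₂j₃ hvj₂ hvj₃
  · -- a fourth junction inside the walk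
    have hfa₄ : Ha.Adj j₄ s₄ :=
      ((hS _ _).1 h₄').resolve_right (fun hB => hns₄ ((SimpleGraph.mem_edgeSet Hb).2 hB))
    have hmemq₄ := ends_mem signedSubgraph_le hVb (q₄.transfer Hb hq₄)
      (not_nil_transfer _ _ hq₄n)
    have hj₄T := hT (hVa hfa₄.1) hmemq₄.2
    have hj₄t : j₄ ∈ R₃.support.tail := by
      have h4 : j₄ ∈ q₄.support.tail := end_mem_tail q₄ hq₄n
      have hEq : R₃.support.tail = q₄.support.tail ++ (Walk.cons h₄' r₄).support.tail := by
        rw [hR₃def, heq₄, Walk.tail_support_append]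
      rw [hEq]
      exact List.mem_append_left _ h4
    have hj₁j₄ : j₁ ≠ j₄ := fun hEq =>
      gd₁ hj₁t (List.mem_append_right _ (List.mem_append_right _ (hEq ▸ hj₄t)))
    have hj₂j₄ : j₂ ≠ j₄ := fun hEq => gd₂ hj₂t (List.mem_append_right _ (hEq ▸ hj₄t))
    have hj₃j₄ : j₃ ≠ j₄ := fun hEq => gd₃ hj₃t (hEq ▸ hj₄t)
    exact pigeon hj₁T hj₂T hj₃T hj₄T hj₁j₂ hj₁j₃ hj₁j₄ hj₂j₃ hj₂j₄ hj₃j₄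

end StmtAux

/-- gluing signed tree-colorings of two balanced signed graphs whose
intersection is a `K₃` (a triangle). -/
theorem stmt3 {V : Type*} [Fintype V]
    (G₁ G₂ : SimpleGraph V) (V₁ V₂ : Set V)
    (hV₁ : ∀ ⦃x y : V⦄, G₁.Adj x y → x ∈ V₁)
    (hV₂ : ∀ ⦃x y : V⦄, G₂.Adj x y → x ∈ V₂)
    (hcover : V₁ ∪ V₂ = Set.univ)
    (σ₁ σ₂ σ : Sym2 V → ℤ)
    (hs₁ : IsSignature G₁ σ₁) (hs₂ : IsSignature G₂ σ₂)
    (hagree : ∀ e ∈ G₁.edgeSet ∩ G₂.edgeSet, σ₁ e = σ₂ e)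
    (hσ₁ : ∀ e ∈ G₁.edgeSet, σ e = σ₁ e) (hσ₂ : ∀ e ∈ G₂.edgeSet, σ e = σ₂ e)
    (hb₁ : IsBalanced G₁ σ₁) (hb₂ : IsBalanced G₂ σ₂)
    (x y z : V) (hxy : x ≠ y) (hyz : y ≠ z) (hxz : x ≠ z)
    (hK3verts : V₁ ∩ V₂ = {x, y, z})
    (hK3edges₁ : G₁.Adj x y ∧ G₁.Adj y z ∧ G₁.Adj x z)
    (hK3edges₂ : G₂.Adj x y ∧ G₂.Adj y z ∧ G₂.Adj x z)
    (hK3only : ∀ ⦃u v : V⦄, G₁.Adj u v → G₂.Adj u v →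
      s(u, v) = s(x, y) ∨ s(u, v) = s(y, z) ∨ s(u, v) = s(x, z))
    (c₁ c₂ c : V → ℤ)
    (h₁ : IsSignedTreeColoring G₁ σ₁ c₁) (h₂ : IsSignedTreeColoring G₂ σ₂ c₂)
    (hcc : ∀ v ∈ V₁ ∩ V₂, c₁ v = c₂ v)
    (hc₁ : ∀ v ∈ V₁, c v = c₁ v) (hc₂ : ∀ v ∈ V₂, c v = c₂ v) :
    IsSignedTreeColoring (G₁ ⊔ G₂) σ c := by
  classical
  have hgeq₁ : ∀ j : ℤ, signedSubgraph G₁ σ c j = signedSubgraph G₁ σ₁ c₁ j := by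
    intro j
    ext a b
    constructor
    · rintro ⟨h1, h2, h3, h4⟩
      have hσe : σ s(a, b) = σ₁ s(a, b) := hσ₁ _ ((SimpleGraph.mem_edgeSet G₁).2 h1)
      have hca : c a = c₁ a := hc₁ a (hV₁ h1)
      have hcb : c b = c₁ b := hc₁ b (hV₁ h1.symm)
      rw [hσe] at h2
      rw [hca] at h2 h3
      rw [hcb] at h2 h4
      exact ⟨h1, h2, h3, h4⟩
    · rintro ⟨h1, h2, h3, h4⟩
      have hσe : σ s(a, b) = σ₁ s(a, b) := hσ₁ _ ((SimpleGraph.mem_edgeSet G₁).2 h1)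
      have hca : c a = c₁ a := hc₁ a (hV₁ h1)
      have hcb : c b = c₁ b := hc₁ b (hV₁ h1.symm)
      rw [← hσe] at h2
      rw [← hca] at h2 h3
      rw [← hcb] at h2 h4
      exact ⟨h1, h2, h3, h4⟩
  have hgeq₂ : ∀ j : ℤ, signedSubgraph G₂ σ c j = signedSubgraph G₂ σ₂ c₂ j := by
    intro j
    ext a b
    constructor
    · rintro ⟨h1, h2, h3, h4⟩
      have hσe : σ s(a, b) = σ₂ s(a, b) := hσ₂ _ ((SimpleGraph.mem_edgeSet G₂).2 h1)
      have hca : c a = c₂ a := hc₂ a (hV₂ h1)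
      have hcb : c b = c₂ b := hc₂ b (hV₂ h1.symm)
      rw [hσe] at h2
      rw [hca] at h2 h3
      rw [hcb] at h2 h4
      exact ⟨h1, h2, h3, h4⟩
    · rintro ⟨h1, h2, h3, h4⟩
      have hσe : σ s(a, b) = σ₂ s(a, b) := hσ₂ _ ((SimpleGraph.mem_edgeSet G₂).2 h1)
      have hca : c a = c₂ a := hc₂ a (hV₂ h1)
      have hcb : c b = c₂ b := hc₂ b (hV₂ h1.symm)
      rw [← hσe] at h2
      rw [← hca] at h2 h3
      rw [← hcb] at h2 h4
      exact ⟨h1, h2, h3, h4⟩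
  have hsigA : IsSignature G₁ σ := fun e he => by rw [hσ₁ e he]; exact hs₁ e he
  have hsigB : IsSignature G₂ σ := fun e he => by rw [hσ₂ e he]; exact hs₂ e he
  have hbalA : IsBalanced G₁ σ := by
    intro a w hw
    have hcnt : List.countP (fun e => decide (σ e = -1)) w.edges
        = List.countP (fun e => decide (σ₁ e = -1)) w.edges :=
      List.countP_congr (fun e he => by simp [hσ₁ e (w.edges_subset_edgeSet he)])
    rw [hcnt]
    exact hb₁ w hw
  have hbalB : IsBalanced G₂ σ := by
    intro a w hw
    have hcnt : List.countP (fun e => decide (σ e = -1)) w.edges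
        = List.countP (fun e => decide (σ₂ e = -1)) w.edges :=
      List.countP_congr (fun e he => by simp [hσ₂ e (w.edges_subset_edgeSet he)])
    rw [hcnt]
    exact hb₂ w hw
  have hacA : ∀ j : ℤ, (signedSubgraph G₁ σ c j).IsAcyclic := fun j => by
    rw [hgeq₁ j]; exact StmtAux.acyclic_all h₁ j
  have hacB : ∀ j : ℤ, (signedSubgraph G₂ σ c j).IsAcyclic := fun j => by
    rw [hgeq₂ j]; exact StmtAux.acyclic_all h₂ j
  intro u v w hw
  cases w with
  | nil => exact absurd rfl hw.ne_nil
  | cons hadj p =>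
    have hS : ∀ a b : V, (signedSubgraph (G₁ ⊔ G₂) σ c (c u)).Adj a b ↔
        (signedSubgraph G₁ σ c (c u)).Adj a b ∨ (signedSubgraph G₂ σ c (c u)).Adj a b := by
      intro a b
      constructor
      · rintro ⟨h1 | h1, h2, h3, h4⟩
        · exact Or.inl ⟨h1, h2, h3, h4⟩
        · exact Or.inr ⟨h1, h2, h3, h4⟩
      · rintro (⟨h1, h2, h3, h4⟩ | ⟨h1, h2, h3, h4⟩)
        · exact ⟨Or.inl h1, h2, h3, h4⟩
        · exact ⟨Or.inr h1, h2, h3, h4⟩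
    rcases (hS v _).1 hadj with hA | hB
    · exact StmtAux.peel hV₁ hV₂ hsigA hsigB hbalA hbalB (hacA (c u)) (hacB (c u))
        hK3verts hK3edges₁ hK3edges₂ hS hadj p hw hA
    · exact StmtAux.peel hV₂ hV₁ hsigB hsigA hbalB hbalA (hacB (c u)) (hacA (c u))
        (by rw [Set.inter_comm]; exact hK3verts) hK3edges₂ hK3edges₁
        (fun a b => by rw [hS a b]; exact or_comm) hadj p hw hB
end

section
/- Let (W,σ) be a signed Wagner graph, i.e., W has vertex set {v₁,...,v₈} with edges v₁v₂, v₂v₃, v₃v₄, v₄v₅, v₅v₆, v₆v₇, v₇v₈, v₈v₁, v₁v₅, v₂v₆, v₃v₇, v₄v₈, and σ is any signature on W. Suppose each vertex v_k is assigned a list L(v_k) ⊆ ℤ of colors such that for some edge v_iv_j of W, L(v_i) = {α} and L(v_j) = {β} are singletons, and |L(v_k)| ≥ 3 for every k ≠ i,j. Then there is a signed tree-coloring c of (W,σ) with c(v_k) ∈ L(v_k) for every 1 ≤ k ≤ 8. -/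
/-- The Wagner graph on vertices `v₁, …, v₈` (as `Fin 8`): the 8-cycle together with
the four "diameter" edges `vᵢv_{i+4}`. -/
def wagnerGraph : SimpleGraph (Fin 8) :=
  SimpleGraph.fromRel (fun i j => j = i + 1 ∨ j = i + 4)

instance : DecidableRel wagnerGraph.Adj := fun a b =>
  decidable_of_iff _ (SimpleGraph.fromRel_adj _ a b).symm

lemma acyclic_of_two_edges {V : Type*} (H : SimpleGraph V) (e1 e2 : Sym2 V)
    (h : ∀ f ∈ H.edgeSet, f = e1 ∨ f = e2) : H.IsAcyclic := by
  intro u w hw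
  have h3 := hw.three_le_length
  have hnd : w.edges.Nodup := hw.edges_nodup
  have hlen : w.edges.length = w.length := w.length_edges
  have hl : 3 ≤ w.edges.length := by omega
  have hinj := List.nodup_iff_injective_get.mp hnd
  have g : ∀ (i : Fin w.edges.length), w.edges.get i = e1 ∨ w.edges.get i = e2 :=
    fun i => h _ (w.edges_subset_edgeSet (w.edges.get_mem _))
  have g0 := g ⟨0, by omega⟩
  have g1 := g ⟨1, by omega⟩
  have g2 := g ⟨2, by omega⟩
  rcases g0 with g0 | g0 <;> rcases g1 with g1 | g1 <;> rcases g2 with g2 | g2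
  · exact absurd (hinj (g0.trans g1.symm)) (by simp)
  · exact absurd (hinj (g0.trans g1.symm)) (by simp)
  · exact absurd (hinj (g0.trans g2.symm)) (by simp)
  · exact absurd (hinj (g1.trans g2.symm)) (by simp)
  · exact absurd (hinj (g1.trans g2.symm)) (by simp)
  · exact absurd (hinj (g0.trans g2.symm)) (by simp)
  · exact absurd (hinj (g0.trans g1.symm)) (by simp)
  · exact absurd (hinj (g0.trans g1.symm)) (by simp)

lemma greedy (σ : Sym2 (Fin 8) → ℤ) (hσ : IsSignature wagnerGraph σ)
    (L : Fin 8 → Finset ℤ) (i j : Fin 8)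
    (hNi : (L i).Nonempty) (hNj : (L j).Nonempty)
    (hL : ∀ k : Fin 8, k ≠ i → k ≠ j → 3 ≤ (L k).card)
    (a : Fin 8 → Fin 8) (ha : Function.Bijective a)
    (h0 : a 0 = i) (h1 : a 1 = j) (m : Fin 8)
    (hdeg : ∀ k : Fin 8, 2 ≤ (k : ℕ) →
      ((Finset.univ.filter (fun p : Fin 8 =>
        p < k ∧ ¬(p = m ∧ (k : ℕ) = 7) ∧ wagnerGraph.Adj (a p) (a k))).card ≤ 2)) :
    ∃ c : Fin 8 → ℤ, IsSignedTreeColoring wagnerGraph σ c ∧ ∀ v, c v ∈ L v := by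
  have hinj := ha.injective
  have hLk : ∀ k : Fin 8, 2 ≤ (k : ℕ) → 3 ≤ (L (a k)).card := by
    intro k hk
    apply hL
    · intro h; exact absurd hk (by rw [hinj (h.trans h0.symm)]; decide)
    · intro h; exact absurd hk (by rw [hinj (h.trans h1.symm)]; decide)
  have key : ∀ n : ℕ, n ≤ 8 → ∃ c : Fin 8 → ℤ,
      (∀ p : Fin 8, (p : ℕ) < n → c (a p) ∈ L (a p)) ∧
      (∀ p q : Fin 8, p < q → (q : ℕ) < n → ¬(p = 0 ∧ q = 1) → ¬(p = m ∧ (q : ℕ) = 7) →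
        wagnerGraph.Adj (a p) (a q) →
        c (a q) ≠ σ s(a p, a q) * c (a p) ∧ c (a p) ≠ σ s(a p, a q) * c (a q)) := by
    intro n
    induction n with
    | zero =>
      exact fun _ => ⟨fun _ => 0, fun p hp => absurd hp (by omega),
        fun p q _ hq => absurd hq (by omega)⟩
    | succ n ih =>
      intro hn
      obtain ⟨c, hmem, hcon⟩ := ih (by omega)
      set k : Fin 8 := ⟨n, by omega⟩ with hk
      have hkn : (k : ℕ) = n := rfl
      -- choose a color x for the vertex a k
      have hx : ∃ x ∈ L (a k), ∀ p : Fin 8, p < k → ¬(p = 0 ∧ k = 1) →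
          ¬(p = m ∧ (k : ℕ) = 7) →
          wagnerGraph.Adj (a p) (a k) → x ≠ σ s(a p, a k) * c (a p) ∧
          c (a p) ≠ σ s(a p, a k) * x := by
        by_cases hn2 : n < 2
        · have hcase : n = 0 ∨ n = 1 := by omega
          have hne : (L (a k)).Nonempty := by
            rcases hcase with h | h
            · have hk0 : k = 0 := Fin.ext (by rw [hkn, h]; rfl)
              rw [hk0, h0]; exact hNi
            · have hk1 : k = 1 := Fin.ext (by rw [hkn, h]; rfl)
              rw [hk1, h1]; exact hNj
          obtain ⟨x, hxL⟩ := hne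
          refine ⟨x, hxL, fun p hp hp01 _ _ => ?_⟩
          exfalso
          rcases hcase with h | h
          · have : (p : ℕ) < (k : ℕ) := hp
            rw [hkn, h] at this; omega
          · have hk1 : k = 1 := Fin.ext (by rw [hkn, h]; rfl)
            have : (p : ℕ) < (k : ℕ) := hp
            rw [hkn, h] at this
            exact hp01 ⟨Fin.ext (by omega), hk1⟩
        · push_neg at hn2
          set F : Finset ℤ := (Finset.univ.filter (fun p : Fin 8 =>
            p < k ∧ ¬(p = m ∧ (k : ℕ) = 7) ∧ wagnerGraph.Adj (a p) (a k))).image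
              (fun p => σ s(a p, a k) * c (a p)) with hF
          have hFcard : F.card ≤ 2 :=
            le_trans (Finset.card_image_le) (hdeg k (by rw [hkn]; omega))
          have hcard : (L (a k) \ F).Nonempty := by
            rw [← Finset.card_pos]
            have := Finset.card_le_card_sdiff_add_card (s := L (a k)) (t := F)
            have h3 := hLk k (by rw [hkn]; omega)
            omega
          obtain ⟨x, hx⟩ := hcard
          rw [Finset.mem_sdiff] at hx
          obtain ⟨hxL, hxF⟩ := hx
          refine ⟨x, hxL, fun p hp _ hpm hadj => ?_⟩
          have hmemF : σ s(a p, a k) * c (a p) ∈ F := by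
            rw [hF]
            exact Finset.mem_image.mpr ⟨p, Finset.mem_filter.mpr ⟨Finset.mem_univ _,
              hp, hpm, hadj⟩, rfl⟩
          constructor
          · intro h; rw [← h] at hmemF; exact hxF hmemF
          · intro h
            have hedge : s(a p, a k) ∈ wagnerGraph.edgeSet :=
              wagnerGraph.mem_edgeSet.mpr hadj
            have hss : σ s(a p, a k) * σ s(a p, a k) = 1 := by
              rcases hσ _ hedge with hs | hs <;> rw [hs] <;> ring
            have : σ s(a p, a k) * c (a p) = x := by
              rw [h, ← mul_assoc, hss, one_mul]
            rw [this] at hmemF; exact hxF hmemF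
      obtain ⟨x, hxL, hxgood⟩ := hx
      have hupd : ∀ p : Fin 8, p ≠ k → Function.update c (a k) x (a p) = c (a p) :=
        fun p hp => Function.update_of_ne (fun h => hp (hinj h)) _ _
      refine ⟨Function.update c (a k) x, ?_, ?_⟩
      · intro p hp
        by_cases hpk : p = k
        · rw [hpk, Function.update_self]; exact hxL
        · rw [hupd p hpk]
          apply hmem
          have : (p : ℕ) ≠ n := fun h => hpk (Fin.ext h)
          omega
      · intro p q hpq hqn hE1 hE2 hadj
        by_cases hqk : q = k
        · subst hqk
          have hpk : p ≠ k := Fin.ne_of_lt hpq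
          rw [Function.update_self, hupd p hpk]
          exact hxgood p hpq hE1 hE2 hadj
        · have hqlt : (q : ℕ) < n := by
            have : (q : ℕ) ≠ n := fun h => hqk (Fin.ext h)
            omega
          have hplt : p ≠ k := by
            intro h
            have : (p : ℕ) = n := congrArg Fin.val h
            have : (p : ℕ) < (q : ℕ) := hpq
            omega
          rw [hupd q hqk, hupd p hplt]
          exact hcon p q hpq hqlt hE1 hE2 hadj
  obtain ⟨c, hmem, hcon⟩ := key 8 le_rfl
  refine ⟨c, ?_, fun v => ?_⟩
  · intro u
    apply acyclic_of_two_edges _ s(a 0, a 1) s(a m, a 7)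
    intro f hf
    induction f using Sym2.ind with
    | _ x y =>
      rw [SimpleGraph.mem_edgeSet] at hf
      obtain ⟨hadj, hdisj, -, -⟩ := hf
      obtain ⟨p, rfl⟩ := ha.surjective x
      obtain ⟨q, rfl⟩ := ha.surjective y
      have hpq : p ≠ q := fun h => hadj.ne (by rw [h])
      rcases lt_or_gt_of_ne hpq with hlt | hgt
      · by_cases hE1 : p = 0 ∧ q = 1
        · left; rw [hE1.1, hE1.2]
        · by_cases hE2 : p = m ∧ (q : ℕ) = 7
          · have hq7 : q = 7 := Fin.ext (by rw [hE2.2]; rfl)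
            right; rw [hE2.1, hq7]
          · obtain ⟨c1, c2⟩ := hcon p q hlt q.isLt hE1 hE2 hadj
            rcases hdisj with h | h
            · exact absurd h c2
            · exact absurd h c1
      · by_cases hE1 : q = 0 ∧ p = 1
        · left; rw [hE1.1, hE1.2, Sym2.eq_swap]
        · by_cases hE2 : q = m ∧ (p : ℕ) = 7
          · have hp7 : p = 7 := Fin.ext (by rw [hE2.2]; rfl)
            right; rw [hE2.1, hp7, Sym2.eq_swap]
          · obtain ⟨c1, c2⟩ := hcon q p hgt p.isLt hE1 hE2 hadj.symm
            rw [Sym2.eq_swap (a := a p)] at hdisj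
            rcases hdisj with h | h
            · exact absurd h c1
            · exact absurd h c2
  · obtain ⟨p, rfl⟩ := ha.surjective v
    exact hmem p p.isLt

/-- list signed tree-coloring of the Wagner graph with two adjacent
vertices precolored and lists of size at least 3 elsewhere. -/
theorem stmt4 (σ : Sym2 (Fin 8) → ℤ) (hσ : IsSignature wagnerGraph σ)
    (L : Fin 8 → Finset ℤ) (i j : Fin 8) (hij : wagnerGraph.Adj i j)
    (α β : ℤ) (hLi : L i = {α}) (hLj : L j = {β})
    (hL : ∀ k : Fin 8, k ≠ i → k ≠ j → 3 ≤ (L k).card) :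
    ∃ c : Fin 8 → ℤ, IsSignedTreeColoring wagnerGraph σ c ∧ ∀ k, c k ∈ L k := by
  have hNi : (L i).Nonempty := by rw [hLi]; exact Finset.singleton_nonempty α
  have hNj : (L j).Nonempty := by rw [hLj]; exact Finset.singleton_nonempty β
  clear hLi hLj
  fin_cases i <;> fin_cases j
  · exact absurd hij (by decide)
  · exact greedy σ hσ L _ _ hNi hNj hL ![(0 : Fin 8),1,2,3,4,5,6,7] (by decide) (by decide) (by decide) (0 : Fin 8) (by decide)
  · exact absurd hij (by decide)
  · exact absurd hij (by decide)
  · exact greedy σ hσ L _ _ hNi hNj hL ![(0 : Fin 8),4,1,2,3,5,6,7] (by decide) (by decide) (by decide) (0 : Fin 8) (by decide)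
  · exact absurd hij (by decide)
  · exact absurd hij (by decide)
  · exact greedy σ hσ L _ _ hNi hNj hL ![(0 : Fin 8),7,1,2,3,4,5,6] (by decide) (by decide) (by decide) (1 : Fin 8) (by decide)
  · exact greedy σ hσ L _ _ hNi hNj hL ![(1 : Fin 8),0,2,3,4,5,6,7] (by decide) (by decide) (by decide) (1 : Fin 8) (by decide)
  · exact absurd hij (by decide)
  · exact greedy σ hσ L _ _ hNi hNj hL ![(1 : Fin 8),2,0,3,4,5,6,7] (by decide) (by decide) (by decide) (2 : Fin 8) (by decide)
  · exact absurd hij (by decide)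
  · exact absurd hij (by decide)
  · exact greedy σ hσ L _ _ hNi hNj hL ![(1 : Fin 8),5,0,2,4,3,6,7] (by decide) (by decide) (by decide) (2 : Fin 8) (by decide)
  · exact absurd hij (by decide)
  · exact absurd hij (by decide)
  · exact absurd hij (by decide)
  · exact greedy σ hσ L _ _ hNi hNj hL ![(2 : Fin 8),1,0,3,4,5,6,7] (by decide) (by decide) (by decide) (2 : Fin 8) (by decide)
  · exact absurd hij (by decide)
  · exact greedy σ hσ L _ _ hNi hNj hL ![(2 : Fin 8),3,0,1,4,5,6,7] (by decide) (by decide) (by decide) (1 : Fin 8) (by decide)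
  · exact absurd hij (by decide)
  · exact absurd hij (by decide)
  · exact greedy σ hσ L _ _ hNi hNj hL ![(2 : Fin 8),6,0,1,5,4,3,7] (by decide) (by decide) (by decide) (1 : Fin 8) (by decide)
  · exact absurd hij (by decide)
  · exact absurd hij (by decide)
  · exact absurd hij (by decide)
  · exact greedy σ hσ L _ _ hNi hNj hL ![(3 : Fin 8),2,0,1,4,5,6,7] (by decide) (by decide) (by decide) (0 : Fin 8) (by decide)
  · exact absurd hij (by decide)
  · exact greedy σ hσ L _ _ hNi hNj hL ![(3 : Fin 8),4,0,1,2,5,6,7] (by decide) (by decide) (by decide) (0 : Fin 8) (by decide)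
  · exact absurd hij (by decide)
  · exact absurd hij (by decide)
  · exact greedy σ hσ L _ _ hNi hNj hL ![(3 : Fin 8),7,0,1,2,4,5,6] (by decide) (by decide) (by decide) (1 : Fin 8) (by decide)
  · exact greedy σ hσ L _ _ hNi hNj hL ![(4 : Fin 8),0,1,2,3,5,6,7] (by decide) (by decide) (by decide) (1 : Fin 8) (by decide)
  · exact absurd hij (by decide)
  · exact absurd hij (by decide)
  · exact greedy σ hσ L _ _ hNi hNj hL ![(4 : Fin 8),3,0,1,2,5,6,7] (by decide) (by decide) (by decide) (1 : Fin 8) (by decide)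
  · exact absurd hij (by decide)
  · exact greedy σ hσ L _ _ hNi hNj hL ![(4 : Fin 8),5,0,1,2,3,6,7] (by decide) (by decide) (by decide) (2 : Fin 8) (by decide)
  · exact absurd hij (by decide)
  · exact absurd hij (by decide)
  · exact absurd hij (by decide)
  · exact greedy σ hσ L _ _ hNi hNj hL ![(5 : Fin 8),1,0,2,4,3,6,7] (by decide) (by decide) (by decide) (2 : Fin 8) (by decide)
  · exact absurd hij (by decide)
  · exact absurd hij (by decide)
  · exact greedy σ hσ L _ _ hNi hNj hL ![(5 : Fin 8),4,0,1,2,3,6,7] (by decide) (by decide) (by decide) (2 : Fin 8) (by decide)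
  · exact absurd hij (by decide)
  · exact greedy σ hσ L _ _ hNi hNj hL ![(5 : Fin 8),6,0,1,2,4,3,7] (by decide) (by decide) (by decide) (1 : Fin 8) (by decide)
  · exact absurd hij (by decide)
  · exact absurd hij (by decide)
  · exact absurd hij (by decide)
  · exact greedy σ hσ L _ _ hNi hNj hL ![(6 : Fin 8),2,0,1,5,4,3,7] (by decide) (by decide) (by decide) (0 : Fin 8) (by decide)
  · exact absurd hij (by decide)
  · exact absurd hij (by decide)
  · exact greedy σ hσ L _ _ hNi hNj hL ![(6 : Fin 8),5,0,1,2,4,3,7] (by decide) (by decide) (by decide) (0 : Fin 8) (by decide)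
  · exact absurd hij (by decide)
  · exact greedy σ hσ L _ _ hNi hNj hL ![(6 : Fin 8),7,0,1,2,3,4,5] (by decide) (by decide) (by decide) (0 : Fin 8) (by decide)
  · exact greedy σ hσ L _ _ hNi hNj hL ![(7 : Fin 8),0,1,2,3,4,5,6] (by decide) (by decide) (by decide) (0 : Fin 8) (by decide)
  · exact absurd hij (by decide)
  · exact absurd hij (by decide)
  · exact greedy σ hσ L _ _ hNi hNj hL ![(7 : Fin 8),3,0,1,2,4,5,6] (by decide) (by decide) (by decide) (0 : Fin 8) (by decide)
  · exact absurd hij (by decide)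
  · exact absurd hij (by decide)
  · exact greedy σ hσ L _ _ hNi hNj hL ![(7 : Fin 8),6,0,1,2,3,4,5] (by decide) (by decide) (by decide) (1 : Fin 8) (by decide)
  · exact absurd hij (by decide)
end

section
/- Let (G,σ) be an edge-maximal K₅-minor-free graph with balanced signature, and suppose a list L(v) ⊆ ℤ of colors with |L(v)| ≥ 3 is given for every vertex v of G. Then there is a signed tree-coloring c of (G,σ) with c(v) ∈ L(v) for every v ∈ V(G). -/
open SimpleGraph

universe u



section Helpers
variable {A : Type u} {B : Type u}

lemma reachable_map (H1 : SimpleGraph A) (H2 : SimpleGraph B) (f : A → B)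
    (hf : ∀ a b, H1.Adj a b → H2.Reachable (f a) (f b)) {x y : A}
    (h : H1.Reachable x y) : H2.Reachable (f x) (f y) := by
  obtain ⟨w⟩ := h
  induction w with
  | nil => exact Reachable.refl _
  | cons h' p ih => exact (hf _ _ h').trans ih

lemma connected_map (H1 : SimpleGraph A) (H2 : SimpleGraph B) (f : A → B)
    (hsurj : Function.Surjective f)
    (hf : ∀ a b, H1.Adj a b → H2.Reachable (f a) (f b))
    (h : H1.Connected) : H2.Connected := by
  have hne : Nonempty A := h.nonempty
  rw [SimpleGraph.connected_iff]
  refine ⟨?_, hne.map f⟩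
  rintro x y
  obtain ⟨a, rfl⟩ := hsurj x
  obtain ⟨b, rfl⟩ := hsurj y
  exact reachable_map H1 H2 f hf (h.preconnected a b)

lemma connected_singleton (G : SimpleGraph A) (v : A) :
    (G.induce {v}).Connected := by
  rw [SimpleGraph.connected_iff]
  refine ⟨?_, ⟨⟨v, rfl⟩⟩⟩
  rintro ⟨x, hx⟩ ⟨y, hy⟩
  simp only [Set.mem_singleton_iff] at hx hy
  subst hx; subst hy
  exact Reachable.refl _

lemma path_loop_eq_nil {G : SimpleGraph A} {v : A} (p : G.Walk v v) (hp : p.IsPath) :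
    p = SimpleGraph.Walk.nil := by
  cases p with
  | nil => rfl
  | cons h q =>
    exfalso
    have := hp.support_nodup
    rw [SimpleGraph.Walk.support_cons] at this
    exact (List.nodup_cons.mp this).1 (q.end_mem_support)

/-- a vertex on a cycle has two distinct neighbors in the graph. -/
lemma cycle_two_neighbors {G : SimpleGraph A} {v : A} (p : G.Walk v v) (hp : p.IsCycle) :
    ∃ a b, a ≠ b ∧ G.Adj v a ∧ G.Adj v b ∧ a ∈ p.support ∧ b ∈ p.support := by
  cases p with
  | nil => exact absurd rfl hp.ne_nil
  | cons h q =>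
    rename_i a
    -- q : Walk a v, q is a path
    have hq : q.IsPath ∧ s(v, a) ∉ q.edges := (SimpleGraph.Walk.cons_isCycle_iff _ _).mp hp
    -- decompose q from the end
    have hlen : 3 ≤ (SimpleGraph.Walk.cons h q).length := hp.three_le_length
    rw [SimpleGraph.Walk.length_cons] at hlen
    have hqlen : 2 ≤ q.length := by omega
    -- q.reverse is non-nil
    cases hq' : q.reverse with
    | nil =>
      exfalso
      have h0 : q.reverse.length = 0 := by rw [hq']; rfl
      rw [SimpleGraph.Walk.length_reverse] at h0
      omega
    | cons h'' r =>
      rename_i b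
      -- h'' : G.Adj v b
      refine ⟨a, b, ?_, h, h'', ?_, ?_⟩
      case refine_2 =>
        rw [SimpleGraph.Walk.support_cons]
        exact List.mem_cons_of_mem _ q.start_mem_support
      case refine_3 =>
        rw [SimpleGraph.Walk.support_cons]
        refine List.mem_cons_of_mem _ ?_
        have hbq : b ∈ q.reverse.support := by
          rw [hq', SimpleGraph.Walk.support_cons]
          exact List.mem_cons_of_mem _ r.start_mem_support
        rw [SimpleGraph.Walk.support_reverse] at hbq
        exact List.mem_reverse.mp hbq
      rintro rfl
      -- then q = r.reverse.concat h''.symm ; a is both start and second-to-last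
      have hq2 : q = (SimpleGraph.Walk.cons h'' r).reverse := by
        rw [← hq']; simp
      rw [SimpleGraph.Walk.reverse_cons] at hq2
      -- q = r.reverse.append (cons h''.symm nil)
      have hr : r.reverse.IsPath := by
        have := hq.1
        rw [hq2] at this
        exact this.of_append_left
      -- r.reverse : Walk a a  (since a = b)
      have := path_loop_eq_nil r.reverse hr
      have hrl : r.length = 0 := by
        have := congrArg SimpleGraph.Walk.length this
        simpa using this
      have hq3 := congrArg SimpleGraph.Walk.length hq2
      rw [SimpleGraph.Walk.length_append, SimpleGraph.Walk.length_reverse, hrl] at hq3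
      simp at hq3
      omega

section Minors
variable {V : Type u}

/-- `G` has a `K_k` minor. -/
def CMinor (G : SimpleGraph V) (k : ℕ) : Prop :=
  ∃ W : Fin k → Set V,
    (∀ i, (W i).Nonempty) ∧
    (Pairwise fun i j => Disjoint (W i) (W j)) ∧
    (∀ i, (G.induce (W i)).Connected) ∧
    (Pairwise fun i j => ∃ u ∈ W i, ∃ v ∈ W j, G.Adj u v)

lemma cminor_induce {G : SimpleGraph V} {s : Set V} {k : ℕ}
    (h : CMinor (G.induce s) k) : CMinor G k := by
  obtain ⟨W, hne, hdisj, hconn, hadj⟩ := h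
  refine ⟨fun i => Subtype.val '' W i, ?_, ?_, ?_, ?_⟩
  · exact fun i => ((hne i).image _)
  · intro i j hij
    exact (Set.disjoint_image_of_injective Subtype.val_injective (hdisj hij))
  · intro i
    refine connected_map _ _ (fun x => ⟨x.1.1, ⟨x.1, x.2, rfl⟩⟩) ?_ ?_ (hconn i)
    · rintro ⟨x, y, hy, rfl⟩
      exact ⟨⟨y, hy⟩, rfl⟩
    · rintro ⟨a, ha⟩ ⟨b, hb⟩ hab
      exact SimpleGraph.Adj.reachable (by exact hab)
  · intro i j hij
    obtain ⟨x, hx, y, hy, hxy⟩ := hadj hij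
    exact ⟨x.1, ⟨x, hx, rfl⟩, y.1, ⟨y, hy, rfl⟩, hxy⟩

lemma cminor_apex {G : SimpleGraph V} {v : V} {k : ℕ}
    (h : CMinor (G.induce (G.neighborSet v)) k) : CMinor G (k + 1) := by
  obtain ⟨W, hne, hdisj, hconn, hadj⟩ := h
  refine ⟨Fin.snoc (fun i => Subtype.val '' W i) {v}, ?_, ?_, ?_, ?_⟩
  · intro i
    refine Fin.lastCases ?_ (fun i => ?_) i
    · rw [Fin.snoc_last]; exact ⟨v, rfl⟩
    · rw [Fin.snoc_castSucc]; exact (hne i).image Subtype.val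
  · intro i j
    refine Fin.lastCases ?_ (fun i' => ?_) i
    · refine Fin.lastCases ?_ (fun j' => ?_) j
      · intro hij; exact (hij rfl).elim
      · intro _
        rw [Fin.snoc_last, Fin.snoc_castSucc, Set.disjoint_singleton_left]
        rintro ⟨y, -, hyv⟩
        exact G.irrefl (hyv ▸ (y.2 : G.Adj v y.1))
    · refine Fin.lastCases ?_ (fun j' => ?_) j
      · intro _
        rw [Fin.snoc_last, Fin.snoc_castSucc, Set.disjoint_singleton_right]
        rintro ⟨y, -, hyv⟩
        exact G.irrefl (hyv ▸ (y.2 : G.Adj v y.1))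
      · intro hij
        rw [Fin.snoc_castSucc, Fin.snoc_castSucc]
        refine Set.disjoint_image_of_injective Subtype.val_injective (hdisj ?_)
        exact fun hh => hij (by rw [hh])
  · intro i
    refine Fin.lastCases ?_ (fun i => ?_) i
    · rw [Fin.snoc_last]; exact connected_singleton G v
    · rw [Fin.snoc_castSucc]
      refine connected_map _ _ (fun x => ⟨x.1.1, ⟨x.1, x.2, rfl⟩⟩) ?_ ?_ (hconn i)
      · rintro ⟨x, y, hy, rfl⟩
        exact ⟨⟨y, hy⟩, rfl⟩
      · rintro ⟨a, ha⟩ ⟨b, hb⟩ hab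
        exact SimpleGraph.Adj.reachable (by exact hab)
  · intro i j
    refine Fin.lastCases ?_ (fun i' => ?_) i
    · refine Fin.lastCases ?_ (fun j' => ?_) j
      · intro hij; exact (hij rfl).elim
      · intro _
        obtain ⟨y, hy⟩ := hne j'
        rw [Fin.snoc_last, Fin.snoc_castSucc]
        exact ⟨v, rfl, y.1, ⟨y, hy, rfl⟩, (y.2 : G.Adj v y.1)⟩
    · refine Fin.lastCases ?_ (fun j' => ?_) j
      · intro _
        obtain ⟨y, hy⟩ := hne i'
        rw [Fin.snoc_last, Fin.snoc_castSucc]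
        exact ⟨y.1, ⟨y, hy, rfl⟩, v, rfl, (y.2 : G.Adj v y.1).symm⟩
      · intro hij
        rw [Fin.snoc_castSucc, Fin.snoc_castSucc]
        have hij' : i' ≠ j' := fun hh => hij (by rw [hh])
        obtain ⟨x, hx, y, hy, hxy⟩ := hadj hij'
        exact ⟨x.1, ⟨x, hx, rfl⟩, y.1, ⟨y, hy, rfl⟩, hxy⟩

/-- contraction of the edge `uv`, realized on the vertex set `{w // w ≠ v}`,
with `u` absorbing `v`'s neighbors. -/
def contractG (G : SimpleGraph V) (u v : V) : SimpleGraph {w : V // w ≠ v} where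
  Adj a b := a.1 ≠ b.1 ∧
    (G.Adj a.1 b.1 ∨ (a.1 = u ∧ G.Adj v b.1) ∨ (b.1 = u ∧ G.Adj a.1 v))
  symm := ⟨by
    rintro a b ⟨h0, h⟩
    refine ⟨h0.symm, ?_⟩
    rcases h with h | ⟨h1, h2⟩ | ⟨h1, h2⟩
    · exact Or.inl h.symm
    · exact Or.inr (Or.inr ⟨h1, h2.symm⟩)
    · exact Or.inr (Or.inl ⟨h1, h2.symm⟩)⟩
  loopless := ⟨by rintro a ⟨h0, _⟩; exact h0 rfl⟩

lemma cminor_contract {G : SimpleGraph V} {u v : V} (huv : G.Adj u v) {k : ℕ}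
    (h : CMinor (contractG G u v) k) : CMinor G k := by
  classical
  have hne' : u ≠ v := huv.ne
  obtain ⟨W, hne, hdisj, hconn, hadj⟩ := h
  set uu : {w : V // w ≠ v} := ⟨u, hne'⟩ with huu
  refine ⟨fun i => Subtype.val '' W i ∪ {x | x = v ∧ uu ∈ W i}, ?_, ?_, ?_, ?_⟩
  · exact fun i => ((hne i).image _).mono Set.subset_union_left
  · intro i j hij
    rw [Set.disjoint_left]
    rintro x hxi hxj
    rcases hxi with ⟨y, hyi, rfl⟩ | ⟨rfl, hui⟩
    · rcases hxj with ⟨z, hzj, hz⟩ | ⟨hyv, -⟩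
      · have hyz : y = z := Subtype.val_injective hz.symm
        exact Set.notMem_empty y (Set.disjoint_iff.mp (hdisj hij) ⟨hyi, hyz ▸ hzj⟩)
      · exact y.2 hyv
    · rcases hxj with ⟨z, hzj, hzv⟩ | ⟨-, huj⟩
      · exact z.2 hzv
      · exact Set.notMem_empty uu (Set.disjoint_iff.mp (hdisj hij) ⟨hui, huj⟩)
  · intro i
    -- connectivity of the lifted set
    set S : Set V := Subtype.val '' W i ∪ {x | x = v ∧ uu ∈ W i} with hS
    have hSsub : ∀ (x : ↑(W i)), x.1.1 ∈ S := fun x => Or.inl ⟨x.1, x.2, rfl⟩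
    set f : ↑(W i) → ↑S := fun x => ⟨x.1.1, hSsub x⟩ with hf
    rw [SimpleGraph.connected_iff]
    constructor
    · have key : ∀ (a b : ↑(W i)), ((contractG G u v).induce (W i)).Adj a b →
          (G.induce S).Reachable (f a) (f b) := by
        intro a b hab
        obtain ⟨h0, hcase⟩ := hab
        rcases hcase with hreal | ⟨hau, hvb⟩ | ⟨hbu, hav⟩
        · exact SimpleGraph.Adj.reachable (by exact hreal)
        · have hau' : (a.1.1 : V) = u := hau
          have hauu : a.1 = uu := Subtype.ext hau'
          have hmem : (v : V) ∈ S := Or.inr ⟨rfl, hauu ▸ a.2⟩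
          have e1 : (G.induce S).Adj (f a) ⟨v, hmem⟩ := by
            show G.Adj a.1.1 v
            exact hau' ▸ huv
          have e2 : (G.induce S).Adj ⟨v, hmem⟩ (f b) := by
            show G.Adj v b.1.1
            exact hvb
          exact e1.reachable.trans e2.reachable
        · have hbu' : (b.1.1 : V) = u := hbu
          have hbuu : b.1 = uu := Subtype.ext hbu'
          have hmem : (v : V) ∈ S := Or.inr ⟨rfl, hbuu ▸ b.2⟩
          have e1 : (G.induce S).Adj (f a) ⟨v, hmem⟩ := by
            show G.Adj a.1.1 v
            exact hav
          have e2 : (G.induce S).Adj ⟨v, hmem⟩ (f b) := by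
            show G.Adj v b.1.1
            exact hbu' ▸ huv.symm
          exact e1.reachable.trans e2.reachable
      have main : ∀ (a b : ↑(W i)), (G.induce S).Reachable (f a) (f b) := by
        intro a b
        exact reachable_map _ _ f key ((hconn i).preconnected a b)
      rintro ⟨x, hx⟩ ⟨y, hy⟩
      have reduce : ∀ (x : V) (hx : x ∈ S),
          ∃ (a : ↑(W i)), (G.induce S).Reachable ⟨x, hx⟩ (f a) := by
        rintro x (⟨y, hy, rfl⟩ | ⟨hxv, hu⟩)
        · exact ⟨⟨y, hy⟩, SimpleGraph.Reachable.refl _⟩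
        · refine ⟨⟨uu, hu⟩, SimpleGraph.Adj.reachable ?_⟩
          show G.Adj x u
          exact hxv ▸ huv.symm
      obtain ⟨a, hxa⟩ := reduce x hx
      obtain ⟨b, hyb⟩ := reduce y hy
      exact hxa.trans ((main a b).trans hyb.symm)
    · obtain ⟨y, hy⟩ := hne i
      exact ⟨⟨y.1, Or.inl ⟨y, hy, rfl⟩⟩⟩
  · intro i j hij
    obtain ⟨x, hx, y, hy, h0, hxy⟩ := hadj hij
    rcases hxy with hreal | ⟨hxu, hvy⟩ | ⟨hyu, hxv⟩
    · exact ⟨x.1, Or.inl ⟨x, hx, rfl⟩, y.1, Or.inl ⟨y, hy, rfl⟩, hreal⟩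
    · refine ⟨v, Or.inr ⟨rfl, ?_⟩, y.1, Or.inl ⟨y, hy, rfl⟩, hvy⟩
      have : x = uu := Subtype.val_injective hxu
      rwa [← this]
    · refine ⟨x.1, Or.inl ⟨x, hx, rfl⟩, v, Or.inr ⟨rfl, ?_⟩, hxv⟩
      have : y = uu := Subtype.val_injective hyu
      rwa [← this]
end Minors

section Tools
variable {V : Type u}

/-- degree as `ncard` of the neighbor set. -/
noncomputable def nd (G : SimpleGraph V) (v : V) : ℕ := (G.neighborSet v).ncard

lemma induce_neighborSet_image (G : SimpleGraph V) (s : Set V) (x : ↑s) :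
    Subtype.val '' ((G.induce s).neighborSet x) = G.neighborSet x.1 ∩ s := by
  ext y
  constructor
  · rintro ⟨z, hz, rfl⟩
    exact ⟨hz, z.2⟩
  · rintro ⟨hy, hys⟩
    exact ⟨⟨y, hys⟩, hy, rfl⟩

lemma nd_induce (G : SimpleGraph V) (s : Set V) (x : ↑s) :
    nd (G.induce s) x = (G.neighborSet x.1 ∩ s).ncard := by
  rw [nd, ← induce_neighborSet_image G s x, Set.ncard_image_of_injective _ Subtype.val_injective]

/-- the connected component of `G.induce B` containing `w₀`, as a subset of `V`. -/
def comp (G : SimpleGraph V) (B : Set V) (w₀ : ↑B) : Set V :=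
  Subtype.val '' {x : ↑B | (G.induce B).Reachable w₀ x}

lemma comp_subset (G : SimpleGraph V) (B : Set V) (w₀ : ↑B) : comp G B w₀ ⊆ B := by
  rintro x ⟨y, _, rfl⟩; exact y.2

lemma mem_comp_self (G : SimpleGraph V) (B : Set V) (w₀ : ↑B) : w₀.1 ∈ comp G B w₀ :=
  ⟨w₀, Reachable.refl _, rfl⟩

lemma comp_closed (G : SimpleGraph V) (B : Set V) (w₀ : ↑B) {y b : V}
    (hy : y ∈ comp G B w₀) (hb : b ∈ B) (hadj : G.Adj y b) : b ∈ comp G B w₀ := by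
  obtain ⟨z, hz, rfl⟩ := hy
  exact ⟨⟨b, hb⟩, hz.trans (SimpleGraph.Adj.reachable (by exact hadj)), rfl⟩

lemma comp_connected (G : SimpleGraph V) (B : Set V) (w₀ : ↑B) :
    (G.induce (comp G B w₀)).Connected := by
  rw [SimpleGraph.connected_iff]
  constructor
  · have key : ∀ (a b : ↑B) (w : (G.induce B).Walk a b) (ha : a.1 ∈ comp G B w₀),
        ∃ (hb : b.1 ∈ comp G B w₀),
          (G.induce (comp G B w₀)).Reachable ⟨a.1, ha⟩ ⟨b.1, hb⟩ := by
      intro a b w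
      induction w with
      | nil => intro ha; exact ⟨ha, Reachable.refl _⟩
      | @cons c d e h p ih =>
        intro ha
        have hd : d.1 ∈ comp G B w₀ := comp_closed G B w₀ ha d.2 (by exact h)
        obtain ⟨hb, hr⟩ := ih hd
        refine ⟨hb, Reachable.trans (SimpleGraph.Adj.reachable ?_) hr⟩
        exact (by exact h : G.Adj c.1 d.1)
    rintro ⟨x, hx⟩ ⟨y, hy⟩
    obtain ⟨x', hx', rfl⟩ := hx
    obtain ⟨y', hy', rfl⟩ := hy
    obtain ⟨wx⟩ := hx'
    obtain ⟨wy⟩ := hy'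
    obtain ⟨hmx, rx⟩ := key w₀ x' wx (mem_comp_self G B w₀)
    obtain ⟨hmy, ry⟩ := key w₀ y' wy (mem_comp_self G B w₀)
    exact (rx.symm.trans ry : _)
  · exact ⟨⟨w₀.1, mem_comp_self G B w₀⟩⟩

variable [Fintype V]

/-- auxiliary map collapsing `v` to `u`. -/
noncomputable def collapse (u v : V) (huv : u ≠ v) (x : V) : {w : V // w ≠ v} :=
  @dite _ (x = v) (Classical.dec _) (fun _ => ⟨u, huv⟩) (fun h => ⟨x, h⟩)

lemma collapse_ne (u v : V) (huv : u ≠ v) {x : V} (h : x ≠ v) :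
    collapse u v huv x = ⟨x, h⟩ := by
  rw [collapse]; exact dif_neg h

lemma collapse_v (u v : V) (huv : u ≠ v) : collapse u v huv v = ⟨u, huv⟩ := by
  rw [collapse]; exact dif_pos rfl

/-- contraction does not decrease degrees away from `u`, when there are no common neighbors -/
lemma contract_deg_other {G : SimpleGraph V} {u v : V} (huv : G.Adj u v)
    (hcom : G.neighborSet u ∩ G.neighborSet v = ∅)
    (w : {x : V // x ≠ v}) (hwu : w.1 ≠ u) :
    nd G w.1 ≤ nd (contractG G u v) w := by
  have hmap : Set.MapsTo (collapse u v huv.ne) (G.neighborSet w.1)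
      ((contractG G u v).neighborSet w) := by
    intro n hn
    by_cases h : n = v
    · subst h
      rw [collapse_v]
      exact ⟨hwu, Or.inr (Or.inr ⟨rfl, hn⟩)⟩
    · rw [collapse_ne u v huv.ne h]
      exact ⟨(G.ne_of_adj hn), Or.inl hn⟩
  have hinj : Set.InjOn (collapse u v huv.ne) (G.neighborSet w.1) := by
    intro n1 h1 n2 h2 heq
    by_cases ha : n1 = v <;> by_cases hb : n2 = v
    · rw [ha, hb]
    · exfalso
      rw [ha, collapse_v, collapse_ne u v huv.ne hb] at heq
      have hn2u : n2 = u := by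
        have := congrArg Subtype.val heq; simpa using this.symm
      have a1 : G.Adj w.1 u := hn2u ▸ h2
      have a2 : G.Adj w.1 v := ha ▸ h1
      have hmm : w.1 ∈ G.neighborSet u ∩ G.neighborSet v := ⟨a1.symm, a2.symm⟩
      rw [hcom] at hmm
      exact hmm
    · exfalso
      rw [hb, collapse_v, collapse_ne u v huv.ne ha] at heq
      have hn1u : n1 = u := by
        have := congrArg Subtype.val heq; simpa using this
      have a1 : G.Adj w.1 u := hn1u ▸ h1
      have a2 : G.Adj w.1 v := hb ▸ h2
      have hmm : w.1 ∈ G.neighborSet u ∩ G.neighborSet v := ⟨a1.symm, a2.symm⟩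
      rw [hcom] at hmm
      exact hmm
    · rw [collapse_ne u v huv.ne ha, collapse_ne u v huv.ne hb] at heq
      exact congrArg Subtype.val heq
  exact Set.ncard_le_ncard_of_injOn _ hmap hinj (Set.toFinite _)

/-- the merged vertex has large degree when there are no common neighbors -/
lemma contract_deg_merged {G : SimpleGraph V} {u v : V} (huv : G.Adj u v)
    (hcom : G.neighborSet u ∩ G.neighborSet v = ∅) :
    nd G u + nd G v ≤ nd (contractG G u v) ⟨u, huv.ne⟩ + 2 := by
  classical
  have hsub : {x : {w : V // w ≠ v} | x.1 ∈ (G.neighborSet u ∪ G.neighborSet v) ∧ x.1 ≠ u}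
      ⊆ (contractG G u v).neighborSet ⟨u, huv.ne⟩ := by
    rintro x ⟨hx, hxu⟩
    rcases hx with hx | hx
    · exact ⟨fun h => hxu h.symm, Or.inl hx⟩
    · exact ⟨fun h => hxu h.symm, Or.inr (Or.inl ⟨rfl, hx⟩)⟩
  have himg : Subtype.val '' {x : {w : V // w ≠ v} |
        x.1 ∈ (G.neighborSet u ∪ G.neighborSet v) ∧ x.1 ≠ u}
      = (G.neighborSet u ∪ G.neighborSet v) \ {u, v} := by
    ext y
    constructor
    · rintro ⟨z, ⟨hz, hzu⟩, rfl⟩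
      refine ⟨hz, ?_⟩
      simp only [Set.mem_insert_iff, Set.mem_singleton_iff]
      push_neg
      exact ⟨hzu, z.2⟩
    · rintro ⟨hy, hyuv⟩
      simp only [Set.mem_insert_iff, Set.mem_singleton_iff] at hyuv
      push_neg at hyuv
      exact ⟨⟨y, hyuv.2⟩, ⟨hy, hyuv.1⟩, rfl⟩
  have h1 : ((G.neighborSet u ∪ G.neighborSet v) \ {u, v}).ncard
      ≤ nd (contractG G u v) ⟨u, huv.ne⟩ := by
    rw [← himg, Set.ncard_image_of_injective _ Subtype.val_injective]
    exact Set.ncard_le_ncard hsub (Set.toFinite _)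
  have h2 : nd G u + nd G v ≤ ((G.neighborSet u ∪ G.neighborSet v) \ {u, v}).ncard + 2 := by
    have hdisj : Disjoint (G.neighborSet u) (G.neighborSet v) :=
      Set.disjoint_iff_inter_eq_empty.mpr hcom
    have hu : (G.neighborSet u ∪ G.neighborSet v).ncard = nd G u + nd G v := by
      rw [Set.ncard_union_eq hdisj (Set.toFinite _) (Set.toFinite _)]; rfl
    have hdiff : (G.neighborSet u ∪ G.neighborSet v).ncard
        ≤ ((G.neighborSet u ∪ G.neighborSet v) \ {u, v}).ncard + ({u, v} : Set V).ncard :=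
      Set.ncard_le_ncard_diff_add_ncard _ _ (Set.toFinite _)
    have hcard2 : ({u, v} : Set V).ncard ≤ 2 := by
      apply le_trans (Set.ncard_insert_le _ _)
      simp
    omega
  omega
end Tools

section Count
variable {V : Type u} [Fintype V]

lemma sym2_map_id_of_not_mem {v u : V} (huv : u ≠ v) (e : Sym2 V) (he : v ∉ e) :
    Sym2.map (fun x => ((collapse u v huv x) : V)) e = e := by
  induction e using Sym2.ind with
  | _ a b =>
    rw [Sym2.mem_iff] at he
    push_neg at he
    rw [Sym2.map_pair_eq, collapse_ne u v huv (Ne.symm he.1), collapse_ne u v huv (Ne.symm he.2)]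

lemma contract_edges {G : SimpleGraph V} {u v : V} (huv : G.Adj u v) :
    G.edgeSet.ncard ≤ (contractG G u v).edgeSet.ncard + 1
      + (G.neighborSet u ∩ G.neighborSet v).ncard := by
  classical
  set C := G.neighborSet u ∩ G.neighborSet v with hC
  set X : Set (Sym2 V) := insert s(u,v) ((fun w => s(v,w)) '' C) with hX
  set D := G.edgeSet \ X with hD
  have fv : ((collapse u v huv.ne v) : V) = u := by rw [collapse_v]
  have fne : ∀ (x : V) (h : x ≠ v), ((collapse u v huv.ne x) : V) = x :=
    fun x h => by rw [collapse_ne u v huv.ne h]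
  have hmap : Set.MapsTo (Sym2.map (collapse u v huv.ne)) D (contractG G u v).edgeSet := by
    rintro e ⟨he, hex⟩
    induction e using Sym2.ind with
    | _ a b =>
      rw [Sym2.map_pair_eq, SimpleGraph.mem_edgeSet]
      rw [SimpleGraph.mem_edgeSet] at he
      by_cases ha : a = v <;> by_cases hb : b = v
      · exact absurd (ha ▸ hb ▸ he) (G.irrefl)
      · subst ha
        have hbu : b ≠ u := by
          rintro rfl
          exact hex (Or.inl Sym2.eq_swap)
        refine ⟨?_, Or.inr (Or.inl ⟨fv, ?_⟩)⟩
        · rw [fv, fne b hb]; exact fun h => hbu h.symm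
        · rw [fne b hb]; exact he
      · subst hb
        have hau : a ≠ u := by
          rintro rfl
          exact hex (Or.inl rfl)
        refine ⟨?_, Or.inr (Or.inr ⟨fv, ?_⟩)⟩
        · rw [fv, fne a ha]; exact hau
        · rw [fne a ha]; exact he
      · refine ⟨?_, Or.inl ?_⟩
        · rw [fne a ha, fne b hb]; exact G.ne_of_adj he
        · rw [fne a ha, fne b hb]; exact he
  have hinj : Set.InjOn (Sym2.map (collapse u v huv.ne)) D := by
    intro e1 h1 e2 h2 heq
    have heq' : Sym2.map (fun x => ((collapse u v huv.ne x) : V)) e1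
        = Sym2.map (fun x => ((collapse u v huv.ne x) : V)) e2 := by
      have : (fun x => ((collapse u v huv.ne x) : V))
          = (Subtype.val ∘ collapse u v huv.ne) := rfl
      rw [this, ← Sym2.map_map, ← Sym2.map_map, heq]
    by_cases hv1 : v ∈ e1 <;> by_cases hv2 : v ∈ e2
    · obtain ⟨b, rfl⟩ := (Sym2.mem_iff_exists).mp hv1
      obtain ⟨d, rfl⟩ := (Sym2.mem_iff_exists).mp hv2
      have hb : b ≠ v := by
        intro hh; subst hh; exact G.irrefl ((SimpleGraph.mem_edgeSet G).mp h1.1)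
      have hd : d ≠ v := by
        intro hh; subst hh; exact G.irrefl ((SimpleGraph.mem_edgeSet G).mp h2.1)
      rw [Sym2.map_pair_eq, Sym2.map_pair_eq, fv, fne b hb, fne d hd] at heq'
      rw [Sym2.eq_iff] at heq'
      rcases heq' with ⟨-, rfl⟩ | ⟨h1', h2'⟩
      · rfl
      · exfalso
        exact h1.2 (Or.inl (by rw [h2']; exact Sym2.eq_swap))
    · exfalso
      obtain ⟨b, rfl⟩ := (Sym2.mem_iff_exists).mp hv1
      have hb : b ≠ v := by
        intro hh; subst hh; exact G.irrefl ((SimpleGraph.mem_edgeSet G).mp h1.1)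
      rw [sym2_map_id_of_not_mem huv.ne e2 hv2, Sym2.map_pair_eq, fv, fne b hb] at heq'
      have he2 : G.Adj u b := by
        rw [← heq'] at h2; exact (SimpleGraph.mem_edgeSet G).mp h2.1
      have he1 : G.Adj v b := (SimpleGraph.mem_edgeSet G).mp h1.1
      exact h1.2 (Or.inr ⟨b, ⟨he2, he1⟩, rfl⟩)
    · exfalso
      obtain ⟨d, rfl⟩ := (Sym2.mem_iff_exists).mp hv2
      have hd : d ≠ v := by
        intro hh; subst hh; exact G.irrefl ((SimpleGraph.mem_edgeSet G).mp h2.1)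
      rw [sym2_map_id_of_not_mem huv.ne e1 hv1, Sym2.map_pair_eq, fv, fne d hd] at heq'
      have he1 : G.Adj u d := by
        rw [heq'] at h1; exact (SimpleGraph.mem_edgeSet G).mp h1.1
      have he2 : G.Adj v d := (SimpleGraph.mem_edgeSet G).mp h2.1
      exact h2.2 (Or.inr ⟨d, ⟨he1, he2⟩, rfl⟩)
    · rw [sym2_map_id_of_not_mem huv.ne e1 hv1, sym2_map_id_of_not_mem huv.ne e2 hv2] at heq'
      exact heq'
  have hDle : D.ncard ≤ (contractG G u v).edgeSet.ncard :=
    Set.ncard_le_ncard_of_injOn _ hmap hinj (Set.toFinite _)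
  have hsub : G.edgeSet ⊆ D ∪ X := by
    intro e he
    by_cases hx : e ∈ X
    · exact Or.inr hx
    · exact Or.inl ⟨he, hx⟩
  have hXcard : X.ncard ≤ 1 + C.ncard := by
    refine le_trans (Set.ncard_insert_le _ _) ?_
    have := Set.ncard_image_le (f := fun w => s(v,w)) (s := C) (Set.toFinite _)
    omega
  have hs1 := Set.ncard_le_ncard hsub (Set.toFinite _)
  have hs2 := Set.ncard_union_le D X
  omega

lemma edges_lower {G : SimpleGraph V} (h : ∀ w : V, 6 ≤ nd G w) :
    3 * Fintype.card V ≤ G.edgeSet.ncard := by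
  classical
  letI : DecidableRel G.Adj := Classical.decRel _
  have hdeg : ∀ w : V, 6 ≤ G.degree w := by
    intro w
    have h1 := h w
    have h2 : nd G w = G.degree w := by
      rw [nd, ← Nat.card_coe_set_eq, Nat.card_eq_fintype_card,
        SimpleGraph.card_neighborSet_eq_degree]
    omega
  have hsum := SimpleGraph.sum_degrees_eq_twice_card_edges G
  have h6 : 6 * Fintype.card V ≤ ∑ w : V, G.degree w := by
    calc 6 * Fintype.card V = ∑ _w : V, 6 := by rw [Finset.sum_const, Finset.card_univ]; ring
    _ ≤ ∑ w : V, G.degree w := Finset.sum_le_sum (fun w _ => hdeg w)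
  have hcard : G.edgeSet.ncard = G.edgeFinset.card := by
    rw [← Nat.card_coe_set_eq, Nat.card_eq_fintype_card, SimpleGraph.edgeFinset_card]
  omega

lemma card_ne (v : V) : Nat.card {w : V // w ≠ v} = Fintype.card V - 1 := by
  classical
  rw [Nat.card_eq_fintype_card, Fintype.card_subtype_compl, Fintype.card_subtype_eq]
end Count

section K4
variable {V : Type u}

lemma cminor4 {G : SimpleGraph V} {p q z : V} {K : Set V}
    (hpq : G.Adj p q) (hpz : G.Adj p z) (hqz : G.Adj q z)
    (hKconn : (G.induce K).Connected)
    (hpK : p ∉ K) (hqK : q ∉ K) (hzK : z ∉ K)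
    (hap : ∃ y ∈ K, G.Adj p y) (haq : ∃ y ∈ K, G.Adj q y) (haz : ∃ y ∈ K, G.Adj z y) :
    CMinor G 4 := by
  have hKne : K.Nonempty := by obtain ⟨y, hy, -⟩ := hap; exact ⟨y, hy⟩
  refine ⟨![{p}, {q}, {z}, K], ?_, ?_, ?_, ?_⟩
  · intro i
    fin_cases i
    · exact ⟨p, rfl⟩
    · exact ⟨q, rfl⟩
    · exact ⟨z, rfl⟩
    · exact hKne
  · intro i j hij
    have hne : ∀ (a b : V), a ≠ b → Disjoint ({a} : Set V) ({b} : Set V) := by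
      intro a b hab; simp [hab]
    have hsK : ∀ (a : V), a ∉ K → Disjoint ({a} : Set V) K := by
      intro a ha; simp [ha]
    fin_cases i <;> fin_cases j <;>
      first
        | exact (hij rfl).elim
        | exact hne _ _ hpq.ne
        | exact hne _ _ hpz.ne
        | exact hne _ _ hqz.ne
        | exact hne _ _ hpq.ne.symm
        | exact hne _ _ hpz.ne.symm
        | exact hne _ _ hqz.ne.symm
        | exact hsK _ hpK
        | exact hsK _ hqK
        | exact hsK _ hzK
        | exact (hsK _ hpK).symm
        | exact (hsK _ hqK).symm
        | exact (hsK _ hzK).symm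
  · intro i
    fin_cases i
    · exact connected_singleton G p
    · exact connected_singleton G q
    · exact connected_singleton G z
    · exact hKconn
  · intro i j hij
    have sing : ∀ (a b : V), G.Adj a b → ∃ x ∈ ({a} : Set V), ∃ y ∈ ({b} : Set V), G.Adj x y :=
      fun a b hab => ⟨a, rfl, b, rfl, hab⟩
    have toK : ∀ (a : V), (∃ y ∈ K, G.Adj a y) → ∃ x ∈ ({a} : Set V), ∃ y ∈ K, G.Adj x y := by
      rintro a ⟨y, hy, hay⟩; exact ⟨a, rfl, y, hy, hay⟩
    have fromK : ∀ (a : V), (∃ y ∈ K, G.Adj a y) → ∃ x ∈ K, ∃ y ∈ ({a} : Set V), G.Adj x y := by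
      rintro a ⟨y, hy, hay⟩; exact ⟨y, hy, a, rfl, hay.symm⟩
    fin_cases i <;> fin_cases j <;>
      first
        | exact (hij rfl).elim
        | exact sing _ _ hpq
        | exact sing _ _ hpz
        | exact sing _ _ hqz
        | exact sing _ _ hpq.symm
        | exact sing _ _ hpz.symm
        | exact sing _ _ hqz.symm
        | exact toK _ hap
        | exact toK _ haq
        | exact toK _ haz
        | exact fromK _ hap
        | exact fromK _ haq
        | exact fromK _ haz
end K4

section Deg3

lemma exists_not_mem_of_ncard_lt {W : Type u} [Fintype W] (X : Set W)
    (h : X.ncard < Fintype.card W) : ∃ w, w ∉ X := by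
  by_contra hc
  push_neg at hc
  have : X = Set.univ := Set.eq_univ_of_forall hc
  rw [this, Set.ncard_univ, Nat.card_eq_fintype_card] at h
  omega

lemma card_set_lt {W : Type u} [Fintype W] (s : Set W) [Fintype ↑s] {x : W} (hx : x ∉ s) :
    Fintype.card ↑s < Fintype.card W :=
  Fintype.card_lt_of_injective_of_notMem Subtype.val Subtype.val_injective
    (by rwa [Subtype.range_coe])

lemma triple_adj {V : Type u} {G : SimpleGraph V} {p q z : V}
    (hpq : G.Adj p q) (hpz : G.Adj p z) (hqz : G.Adj q z) :
    ∀ a ∈ ({p,q,z} : Set V), ∀ b ∈ ({p,q,z} : Set V), a ≠ b → G.Adj a b := by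
  intro a ha b hb hab
  simp only [Set.mem_insert_iff, Set.mem_singleton_iff] at ha hb
  rcases ha with rfl | rfl | rfl <;> rcases hb with rfl | rfl | rfl <;>
    first
      | exact (hab rfl).elim
      | assumption
      | exact hpq.symm
      | exact hpz.symm
      | exact hqz.symm

/-- statement of the degree-3 lemma, for strong induction -/
def P3 (n : ℕ) : Prop := ∀ (V : Type u) [Fintype V] (G : SimpleGraph V),
    Fintype.card V ≤ n → ∀ (X : Set V), X.ncard ≤ 2 →
    (∀ x ∈ X, ∀ y ∈ X, x ≠ y → G.Adj x y) →
    (∀ v : V, v ∉ X → 3 ≤ nd G v) → (∃ v₀, v₀ ∉ X) → CMinor G 4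

lemma deg3_step (n : ℕ) (IH : ∀ m, m < n → P3.{u} m) : P3.{u} n := by
  intro V _ G hcard X hX2 hXadj hdeg hex
  classical
  obtain ⟨v₀, hv₀⟩ := hex
  have hcard4 : 4 ≤ Fintype.card V := by
    have h3 : 3 ≤ (G.neighborSet v₀).ncard := hdeg v₀ hv₀
    have hnm : v₀ ∉ G.neighborSet v₀ := by simp
    have hins : (insert v₀ (G.neighborSet v₀)).ncard = (G.neighborSet v₀).ncard + 1 :=
      Set.ncard_insert_of_notMem hnm (Set.toFinite _)
    have hsub : (insert v₀ (G.neighborSet v₀)).ncard ≤ Fintype.card V := by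
      calc (insert v₀ (G.neighborSet v₀)).ncard ≤ (Set.univ : Set V).ncard :=
            Set.ncard_le_ncard (Set.subset_univ _) (Set.toFinite _)
        _ = Fintype.card V := by rw [Set.ncard_univ, Nat.card_eq_fintype_card]
    omega
  by_cases hA : ∃ u v, G.Adj u v ∧ G.neighborSet u ∩ G.neighborSet v = ∅
  · -- Case A : contract an edge lying in no triangle
    obtain ⟨u, v, huv, hcom⟩ := hA
    haveI : Fintype {w : V // w ≠ v} := Fintype.ofFinite _
    have hcard' : Fintype.card {w : V // w ≠ v} < n := by
      have h1 : Nat.card {w : V // w ≠ v} = Fintype.card V - 1 := card_ne v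
      rw [Nat.card_eq_fintype_card] at h1
      omega
    refine cminor_contract huv (IH _ hcard' _ (contractG G u v) le_rfl
      ((collapse u v huv.ne) '' X) ?_ ?_ ?_ ?_)
    · exact le_trans (Set.ncard_image_le (Set.toFinite _)) hX2
    · rintro x' ⟨x, hx, rfl⟩ y' ⟨y, hy, rfl⟩ hxy'
      have hxyne : x ≠ y := fun h => hxy' (h ▸ rfl)
      refine ⟨fun hval => hxy' (Subtype.ext hval), ?_⟩
      by_cases hxv : x = v <;> by_cases hyv : y = v
      · exact absurd (by rw [hxv, hyv] : collapse u v huv.ne x = collapse u v huv.ne y)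
          (fun h => hxy' h)
      · have h1 : ((collapse u v huv.ne x) : V) = u := by rw [hxv, collapse_v]
        have h2 : ((collapse u v huv.ne y) : V) = y := by rw [collapse_ne u v huv.ne hyv]
        refine Or.inr (Or.inl ⟨h1, ?_⟩)
        rw [h2]
        exact hxv ▸ hXadj x hx y hy hxyne
      · have h1 : ((collapse u v huv.ne y) : V) = u := by rw [hyv, collapse_v]
        have h2 : ((collapse u v huv.ne x) : V) = x := by rw [collapse_ne u v huv.ne hxv]
        refine Or.inr (Or.inr ⟨h1, ?_⟩)
        rw [h2]
        exact hyv ▸ (hXadj x hx y hy hxyne)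
      · have h1 : ((collapse u v huv.ne x) : V) = x := by rw [collapse_ne u v huv.ne hxv]
        have h2 : ((collapse u v huv.ne y) : V) = y := by rw [collapse_ne u v huv.ne hyv]
        refine Or.inl ?_
        rw [h1, h2]
        exact hXadj x hx y hy hxyne
    · intro w hw
      by_cases hwu : w = ⟨u, huv.ne⟩
      · have hu : u ∉ X := by
          intro hu
          exact hw ⟨u, hu, by rw [hwu, collapse_ne u v huv.ne huv.ne]⟩
        have hv : v ∉ X := by
          intro hv
          exact hw ⟨v, hv, by rw [hwu, collapse_v]⟩
        have h1 := contract_deg_merged huv hcom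
        have h2 := hdeg u hu
        have h3 := hdeg v hv
        rw [hwu]
        omega
      · have hwu' : w.1 ≠ u := fun h => hwu (Subtype.ext h)
        have hwX : w.1 ∉ X := by
          intro hwX
          refine hw ⟨w.1, hwX, ?_⟩
          have := collapse_ne u v huv.ne w.2
          rw [this]
        have h1 := contract_deg_other huv hcom w hwu'
        have h2 := hdeg w.1 hwX
        omega
    · refine exists_not_mem_of_ncard_lt _ ?_
      have h1 : ((collapse u v huv.ne) '' X).ncard ≤ 2 :=
        le_trans (Set.ncard_image_le (Set.toFinite _)) hX2
      have h2 : Nat.card {w : V // w ≠ v} = Fintype.card V - 1 := card_ne v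
      rw [Nat.card_eq_fintype_card] at h2
      omega
  · -- Case B : every edge is in a triangle
    push_neg at hA
    by_cases hiso : ∃ x ∈ X, G.neighborSet x = ∅
    · -- delete the isolated exceptional vertex
      obtain ⟨x, hxX, hxiso⟩ := hiso
      haveI : Fintype ↑({x}ᶜ : Set V) := Fintype.ofFinite _
      refine cminor_induce (G := G) (s := ({x}ᶜ : Set V))
        (IH _ ?_ _ (G.induce ({x}ᶜ : Set V)) le_rfl
          {y : ↑({x}ᶜ : Set V) | y.1 ∈ X} ?_ ?_ ?_ ?_)
      · refine lt_of_lt_of_le (card_set_lt _ (x := x) ?_) hcard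
        simp
      · have himg : Subtype.val '' {y : ↑({x}ᶜ : Set V) | y.1 ∈ X} ⊆ X := by
          rintro a ⟨b, hb, rfl⟩; exact hb
        rw [← Set.ncard_image_of_injective _ Subtype.val_injective]
        exact le_trans (Set.ncard_le_ncard himg (Set.toFinite _)) hX2
      · rintro a ha b hb hab
        exact hXadj a.1 ha b.1 hb (fun h => hab (Subtype.ext h))
      · intro y hy
        have hsub : G.neighborSet y.1 ⊆ ({x}ᶜ : Set V) := by
          intro m hm hmx
          rw [Set.mem_singleton_iff] at hmx
          apply Set.notMem_empty y.1
          rw [← hxiso]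
          exact (hmx ▸ hm : G.Adj y.1 x).symm
        rw [nd_induce, Set.inter_eq_self_of_subset_left hsub]
        exact hdeg y.1 hy
      · have hvx : v₀ ≠ x := fun h => hv₀ (h ▸ hxX)
        exact ⟨⟨v₀, by simp [hvx]⟩, hv₀⟩
    · push_neg at hiso
      obtain ⟨p, q, z, hpq, hpz, hqz, hXsub⟩ :
          ∃ p q z, G.Adj p q ∧ G.Adj p z ∧ G.Adj q z ∧ X ⊆ ({p,q,z} : Set V) := by
        have h012 : X.ncard = 0 ∨ X.ncard = 1 ∨ X.ncard = 2 := by omega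
        rcases h012 with h0 | h1 | h2
        · have hX0 : X = ∅ := (Set.ncard_eq_zero (Set.toFinite X)).mp h0
          have h3 : 3 ≤ (G.neighborSet v₀).ncard := hdeg v₀ hv₀
          have hne : (G.neighborSet v₀).Nonempty := by
            rw [Set.nonempty_iff_ne_empty]
            intro h
            rw [h, Set.ncard_empty] at h3
            omega
          obtain ⟨u', hu'⟩ := hne
          obtain ⟨z, hz1, hz2⟩ := hA v₀ u' hu'
          exact ⟨v₀, u', z, hu', hz1, hz2, by rw [hX0]; exact Set.empty_subset _⟩
        · obtain ⟨x, hX1⟩ := (Set.ncard_eq_one).mp h1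
          have hxX : x ∈ X := by rw [hX1]; rfl
          obtain ⟨u', hu'⟩ := hiso x hxX
          obtain ⟨z, hz1, hz2⟩ := hA x u' hu'
          refine ⟨x, u', z, hu', hz1, hz2, ?_⟩
          rw [hX1]
          intro a ha
          rw [Set.mem_singleton_iff] at ha
          exact ha ▸ Set.mem_insert _ _
        · obtain ⟨x, y, hxy, hX2'⟩ := (Set.ncard_eq_two).mp h2
          have hxX : x ∈ X := by rw [hX2']; exact Set.mem_insert _ _
          have hyX : y ∈ X := by rw [hX2']; exact Set.mem_insert_of_mem _ rfl
          have hadj : G.Adj x y := hXadj x hxX y hyX hxy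
          obtain ⟨z, hz1, hz2⟩ := hA x y hadj
          refine ⟨x, y, z, hadj, hz1, hz2, ?_⟩
          rw [hX2']
          intro a ha
          rcases ha with rfl | ha
          · exact Set.mem_insert _ _
          · rw [Set.mem_singleton_iff] at ha
            exact ha ▸ Set.mem_insert_of_mem _ (Set.mem_insert _ _)
      have hTadj := triple_adj hpq hpz hqz
      have hT3 : ({p,q,z} : Set V).ncard = 3 :=
        Set.ncard_eq_three.mpr ⟨p, q, z, hpq.ne, hpz.ne, hqz.ne, rfl⟩
      obtain ⟨t, htT, htX⟩ : ∃ t ∈ ({p,q,z} : Set V), t ∉ X := by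
        by_contra hc
        push_neg at hc
        have := Set.ncard_le_ncard (fun a ha => hc a ha) (Set.toFinite X)
        omega
      obtain ⟨w, hwN, hwT⟩ : ∃ w, w ∈ G.neighborSet t ∧ w ∉ ({p,q,z} : Set V) := by
        by_contra hc
        push_neg at hc
        have hsub : G.neighborSet t ⊆ ({p,q,z} : Set V) \ {t} := by
          intro m hm
          refine ⟨hc m hm, ?_⟩
          rw [Set.mem_singleton_iff]
          rintro rfl
          exact G.irrefl hm
        have h1 := Set.ncard_le_ncard hsub (Set.toFinite _)
        rw [Set.ncard_diff_singleton_of_mem htT, hT3] at h1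
        have := hdeg t htX
        rw [nd] at this
        omega
      have hwB : w ∈ (({p,q,z} : Set V)ᶜ) := hwT
      set K : Set V := comp G (({p,q,z} : Set V)ᶜ) ⟨w, hwB⟩ with hKdef
      have hKB : K ⊆ (({p,q,z} : Set V)ᶜ) := comp_subset _ _ _
      have hwK : w ∈ K := mem_comp_self _ _ _
      by_cases hall : (∃ y ∈ K, G.Adj p y) ∧ (∃ y ∈ K, G.Adj q y) ∧ (∃ y ∈ K, G.Adj z y)
      · exact cminor4 hpq hpz hqz (comp_connected _ _ _)
          (fun h => (hKB h) (Set.mem_insert _ _))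
          (fun h => (hKB h) (Set.mem_insert_of_mem _ (Set.mem_insert _ _)))
          (fun h => (hKB h) (Set.mem_insert_of_mem _ (Set.mem_insert_of_mem _ rfl)))
          hall.1 hall.2.1 hall.2.2
      · obtain ⟨t₀, ht₀T, ht₀S⟩ : ∃ t₀ ∈ ({p,q,z} : Set V),
            t₀ ∉ {a | a ∈ ({p,q,z} : Set V) ∧ ∃ y ∈ K, G.Adj a y} := by
          by_cases hpa : ∃ y ∈ K, G.Adj p y
          · by_cases hqa : ∃ y ∈ K, G.Adj q y
            · by_cases hza : ∃ y ∈ K, G.Adj z y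
              · exact absurd ⟨hpa, hqa, hza⟩ hall
              · exact ⟨z, Set.mem_insert_of_mem _ (Set.mem_insert_of_mem _ rfl),
                  fun hs => hza hs.2⟩
            · exact ⟨q, Set.mem_insert_of_mem _ (Set.mem_insert _ _), fun hs => hqa hs.2⟩
          · exact ⟨p, Set.mem_insert _ _, fun hs => hpa hs.2⟩
        set Sset : Set V := {a | a ∈ ({p,q,z} : Set V) ∧ ∃ y ∈ K, G.Adj a y} with hSdef
        set U : Set V := K ∪ Sset with hUdef
        haveI : Fintype ↑U := Fintype.ofFinite _
        have hSsubT : Sset ⊆ ({p,q,z} : Set V) := fun a ha => ha.1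
        have ht₀U : t₀ ∉ U := by
          rintro (h | h)
          · exact (hKB h) ht₀T
          · exact ht₀S h
        refine cminor_induce (s := U) (IH _ ?_ _ (G.induce U) le_rfl
          {y : ↑U | y.1 ∈ Sset} ?_ ?_ ?_ ?_)
        · exact lt_of_lt_of_le (card_set_lt U ht₀U) hcard
        · have h1 : Subtype.val '' {y : ↑U | y.1 ∈ Sset} ⊆ ({p,q,z} : Set V) \ {t₀} := by
            rintro a ⟨b, hb, rfl⟩
            refine ⟨hSsubT hb, ?_⟩
            rw [Set.mem_singleton_iff]
            rintro rfl
            exact ht₀S hb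
          rw [← Set.ncard_image_of_injective _ Subtype.val_injective]
          have h2 := Set.ncard_le_ncard h1 (Set.toFinite _)
          rw [Set.ncard_diff_singleton_of_mem ht₀T, hT3] at h2
          omega
        · rintro a ha b hb hab
          exact hTadj a.1 (hSsubT ha) b.1 (hSsubT hb) (fun h => hab (Subtype.ext h))
        · intro y hy
          have hyK : y.1 ∈ K := by
            rcases y.2 with h | h
            · exact h
            · exact absurd h hy
          have hsub : G.neighborSet y.1 ⊆ U := by
            intro m hm
            by_cases hmT : m ∈ ({p,q,z} : Set V)
            · exact Or.inr ⟨hmT, y.1, hyK, hm.symm⟩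
            · exact Or.inl (comp_closed G _ ⟨w, hwB⟩ hyK hmT hm)
          rw [nd_induce, Set.inter_eq_self_of_subset_left hsub]
          exact hdeg y.1 (fun hX' => (hKB hyK) (hXsub hX'))
        · exact ⟨⟨w, Or.inl hwK⟩, fun h => hwT (hSsubT h)⟩

theorem deg3 (n : ℕ) : P3.{u} n := by
  induction n using Nat.strong_induction_on with
  | _ n IH => exact deg3_step n IH
end Deg3

section M5

/-- statement: e ≥ 3n forces a K₅ minor -/
def P5 (n : ℕ) : Prop := ∀ (V : Type u) [Fintype V] (G : SimpleGraph V),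
    Fintype.card V ≤ n → 1 ≤ Fintype.card V →
    3 * Fintype.card V ≤ G.edgeSet.ncard → CMinor G 5

lemma m5_step (n : ℕ) (IH : ∀ m, m < n → P5.{u} m) : P5.{u} n := by
  intro V _ G hcard hpos hedge
  classical
  by_cases hA : ∃ u v, G.Adj u v ∧ (G.neighborSet u ∩ G.neighborSet v).ncard ≤ 2
  · obtain ⟨u, v, huv, hcom⟩ := hA
    haveI : Fintype {w : V // w ≠ v} := Fintype.ofFinite _
    have h2 : 2 ≤ Fintype.card V := by
      have : Nontrivial V := ⟨u, v, huv.ne⟩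
      exact Fintype.one_lt_card
    have hn1 : Fintype.card {w : V // w ≠ v} = Fintype.card V - 1 := by
      have := card_ne v
      rwa [Nat.card_eq_fintype_card] at this
    have hce := contract_edges huv
    refine cminor_contract huv (IH _ ?_ _ (contractG G u v) le_rfl ?_ ?_)
    · omega
    · omega
    · omega
  · push_neg at hA
    obtain ⟨u, v, huv⟩ : ∃ u v, G.Adj u v := by
      have hne : G.edgeSet.Nonempty := by
        apply Set.nonempty_of_ncard_ne_zero
        omega
      obtain ⟨e, he⟩ := hne
      induction e using Sym2.ind with
      | _ a b => exact ⟨a, b, (SimpleGraph.mem_edgeSet G).mp he⟩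
    haveI : Fintype ↑(G.neighborSet v) := Fintype.ofFinite _
    have hK4 : CMinor (G.induce (G.neighborSet v)) 4 := by
      refine deg3 (Fintype.card ↑(G.neighborSet v)) _ _ le_rfl ∅ (by simp) (by simp) ?_ ?_
      · intro x _
        rw [nd_induce]
        have hadj : G.Adj x.1 v := (x.2 : G.Adj v x.1).symm
        have := hA x.1 v hadj
        omega
      · exact ⟨⟨u, huv.symm⟩, Set.notMem_empty _⟩
    exact cminor_apex hK4

theorem m5 (n : ℕ) : P5.{u} n := by
  induction n using Nat.strong_induction_on with
  | _ n IH => exact m5_step n IH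

/-- every nonempty K₅-minor-free graph has a vertex of degree at most 5 -/
lemma deg_le5 {V : Type u} [Fintype V] [Nonempty V] (G : SimpleGraph V)
    (h5 : ¬ CMinor G 5) : ∃ v, nd G v ≤ 5 := by
  by_contra hc
  push_neg at hc
  have h6 : ∀ w : V, 6 ≤ nd G w := fun w => hc w
  have := edges_lower h6
  have hpos : 1 ≤ Fintype.card V := Fintype.card_pos
  exact h5 (m5 (Fintype.card V) _ G le_rfl hpos this)

/-- hereditary version: in any nonempty vertex subset there is a vertex with ≤ 5 neighbors
inside the subset -/
lemma deg_le5_induce {V : Type u} [Fintype V] (G : SimpleGraph V)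
    (h5 : ¬ CMinor G 5) (s : Set V) (hs : s.Nonempty) :
    ∃ x ∈ s, (G.neighborSet x ∩ s).ncard ≤ 5 := by
  classical
  haveI : Fintype ↑s := Fintype.ofFinite _
  haveI : Nonempty ↑s := hs.to_subtype
  have h5' : ¬ CMinor (G.induce s) 5 := fun h => h5 (cminor_induce h)
  obtain ⟨x, hx⟩ := deg_le5 (G.induce s) h5'
  rw [nd_induce] at hx
  exact ⟨x.1, x.2, hx⟩
end M5

section Color
variable {V : Type u} [Fintype V]

lemma rank_aux (G : SimpleGraph V) (h5 : ¬ CMinor G 5) :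
    ∀ (n : ℕ) (s : Finset V), s.card ≤ n →
    ∃ r : V → ℕ, Set.InjOn r ↑s ∧ (∀ v ∈ s, r v < s.card) ∧
      ∀ v ∈ s, ({u | u ∈ s ∧ G.Adj u v ∧ r u < r v}).ncard ≤ 5 := by
  classical
  intro n
  induction n with
  | zero =>
    intro s hs
    have hse : s = ∅ := Finset.card_eq_zero.mp (Nat.le_antisymm hs (Nat.zero_le _))
    subst hse
    exact ⟨fun _ => 0, by simp, by simp, by simp⟩
  | succ n ih =>
    intro s hs
    by_cases hse : s = ∅
    · subst hse
      exact ⟨fun _ => 0, by simp, by simp, by simp⟩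
    · have hne : s.Nonempty := Finset.nonempty_iff_ne_empty.mpr hse
      obtain ⟨x, hxs, hxdeg⟩ := deg_le5_induce G h5 ↑s (by exact_mod_cast hne.to_set)
      have hxs' : x ∈ s := hxs
      obtain ⟨r', hinj', hlt', hcnt'⟩ := ih (s.erase x)
        (by rw [Finset.card_erase_of_mem hxs']; omega)
      refine ⟨Function.update r' x (s.card - 1), ?_, ?_, ?_⟩
      · intro a ha b hb heq
        by_cases hax : a = x <;> by_cases hbx : b = x
        · rw [hax, hbx]
        · exfalso
          rw [hax, Function.update_self, Function.update_of_ne hbx] at heq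
          have hb' : b ∈ s.erase x := Finset.mem_erase.mpr ⟨hbx, hb⟩
          have := hlt' b hb'
          rw [Finset.card_erase_of_mem hxs'] at this
          omega
        · exfalso
          rw [hbx, Function.update_self, Function.update_of_ne hax] at heq
          have ha' : a ∈ s.erase x := Finset.mem_erase.mpr ⟨hax, ha⟩
          have := hlt' a ha'
          rw [Finset.card_erase_of_mem hxs'] at this
          omega
        · rw [Function.update_of_ne hax, Function.update_of_ne hbx] at heq
          exact hinj' (Finset.mem_coe.mpr (Finset.mem_erase.mpr ⟨hax, ha⟩))
            (Finset.mem_coe.mpr (Finset.mem_erase.mpr ⟨hbx, hb⟩)) heq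
      · intro v hv
        by_cases hvx : v = x
        · rw [hvx, Function.update_self]
          have : 1 ≤ s.card := Finset.card_pos.mpr hne
          omega
        · rw [Function.update_of_ne hvx]
          have hv' : v ∈ s.erase x := Finset.mem_erase.mpr ⟨hvx, hv⟩
          have := hlt' v hv'
          rw [Finset.card_erase_of_mem hxs'] at this
          omega
      · intro v hv
        by_cases hvx : v = x
        · subst hvx
          refine le_trans (Set.ncard_le_ncard ?_ (Set.toFinite _)) hxdeg
          rintro u ⟨hus, huv, -⟩
          exact ⟨huv.symm, hus⟩
        · have hv' : v ∈ s.erase x := Finset.mem_erase.mpr ⟨hvx, hv⟩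
          have hkey : {u | u ∈ s ∧ G.Adj u v ∧ Function.update r' x (s.card - 1) u
                < Function.update r' x (s.card - 1) v}
              = {u | u ∈ s.erase x ∧ G.Adj u v ∧ r' u < r' v} := by
            ext u
            simp only [Set.mem_setOf_eq]
            rw [Function.update_of_ne hvx]
            by_cases hux : u = x
            · subst hux
              rw [Function.update_self]
              have := hlt' v hv'
              rw [Finset.card_erase_of_mem hxs'] at this
              constructor
              · rintro ⟨-, -, hlt⟩; omega
              · rintro ⟨hmem, -, -⟩
                exact absurd rfl (Finset.mem_erase.mp hmem).1
            · rw [Function.update_of_ne hux]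
              constructor
              · rintro ⟨hus, h2, h3⟩
                exact ⟨Finset.mem_erase.mpr ⟨hux, hus⟩, h2, h3⟩
              · rintro ⟨hus, h2, h3⟩
                exact ⟨(Finset.mem_erase.mp hus).2, h2, h3⟩
          rw [hkey]
          exact hcnt' v hv'

lemma rank_exists (G : SimpleGraph V) (h5 : ¬ CMinor G 5) :
    ∃ r : V → ℕ, Function.Injective r ∧
      ∀ v, ({u | G.Adj u v ∧ r u < r v}).ncard ≤ 5 := by
  obtain ⟨r, hinj, -, hcnt⟩ := rank_aux G h5 (Finset.univ.card) Finset.univ le_rfl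
  refine ⟨r, fun a b hab => hinj (by simp) (by simp) hab, ?_⟩
  intro v
  have := hcnt v (Finset.mem_univ v)
  have hset : {u | u ∈ Finset.univ ∧ G.Adj u v ∧ r u < r v} = {u | G.Adj u v ∧ r u < r v} := by
    ext u; simp
  rwa [hset] at this

lemma sigma_invol {G : SimpleGraph V} {σ : Sym2 V → ℤ} (hσ : IsSignature G σ)
    {u v : V} (huv : G.Adj u v) : σ s(u,v) * σ s(u,v) = 1 := by
  rcases hσ s(u,v) ((SimpleGraph.mem_edgeSet G).mpr huv) with h | h <;> rw [h] <;> ring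

lemma color_aux (G : SimpleGraph V) (σ : Sym2 V → ℤ) (hσ : IsSignature G σ)
    (L : V → Finset ℤ) (hL : ∀ v, 3 ≤ (L v).card)
    (r : V → ℕ) (hrinj : Function.Injective r)
    (hdeg : ∀ v, ({u | G.Adj u v ∧ r u < r v}).ncard ≤ 5) :
    ∀ t : ℕ, ∃ c : V → ℤ, ∀ v, r v < t →
      (c v ∈ L v ∧ ({u | G.Adj u v ∧ r u < r v ∧ c u = σ s(u,v) * c v}).ncard ≤ 1) := by
  classical
  intro t
  induction t with
  | zero => exact ⟨fun _ => 0, fun v hv => absurd hv (by omega)⟩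
  | succ t ih =>
    obtain ⟨c, hc⟩ := ih
    by_cases hvt : ∃ v, r v = t
    · obtain ⟨v, hvrt⟩ := hvt
      -- pigeonhole for a good color at v
      have hgood : ∃ j ∈ L v,
          ({u | (G.Adj u v ∧ r u < r v) ∧ σ s(u,v) * c u = j}).ncard ≤ 1 := by
        by_contra hno
        push_neg at hno
        obtain ⟨T3, hT3sub, hT3card⟩ := Finset.exists_subset_card_eq (hL v)
        obtain ⟨j1, j2, j3, h12, h13, h23, hT3⟩ := Finset.card_eq_three.mp hT3card
        have hj1 : j1 ∈ L v := hT3sub (by rw [hT3]; simp)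
        have hj2 : j2 ∈ L v := hT3sub (by rw [hT3]; simp)
        have hj3 : j3 ∈ L v := hT3sub (by rw [hT3]; simp)
        set B : ℤ → Set V := fun j => {u | (G.Adj u v ∧ r u < r v) ∧ σ s(u,v) * c u = j}
          with hB
        have hBsub : ∀ j, B j ⊆ {u | G.Adj u v ∧ r u < r v} := fun j u hu => hu.1
        have hdisj : ∀ j j', j ≠ j' → Disjoint (B j) (B j') := by
          intro j j' hjj'
          rw [Set.disjoint_left]
          rintro u ⟨-, hu1⟩ ⟨-, hu2⟩
          exact hjj' (hu1 ▸ hu2 ▸ rfl)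
        have h2 : ∀ j ∈ L v, 2 ≤ (B j).ncard := fun j hj => hno j hj
        have hu12 : ((B j1) ∪ (B j2)).ncard = (B j1).ncard + (B j2).ncard :=
          Set.ncard_union_eq (hdisj _ _ h12) (Set.toFinite _) (Set.toFinite _)
        have hu123 : ((B j1) ∪ (B j2) ∪ (B j3)).ncard
            = ((B j1) ∪ (B j2)).ncard + (B j3).ncard := by
          refine Set.ncard_union_eq ?_ (Set.toFinite _) (Set.toFinite _)
          rw [Set.disjoint_union_left]
          exact ⟨hdisj _ _ h13, hdisj _ _ h23⟩
        have hsub : (B j1) ∪ (B j2) ∪ (B j3) ⊆ {u | G.Adj u v ∧ r u < r v} := by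
          rintro u ((h | h) | h)
          · exact hBsub j1 h
          · exact hBsub j2 h
          · exact hBsub j3 h
        have hle := Set.ncard_le_ncard hsub (Set.toFinite _)
        have := hdeg v
        have g1 := h2 j1 hj1
        have g2 := h2 j2 hj2
        have g3 := h2 j3 hj3
        omega
      obtain ⟨j, hjL, hjcnt⟩ := hgood
      refine ⟨Function.update c v j, ?_⟩
      intro w hw
      by_cases hwt : r w < t
      · have hwv : w ≠ v := fun h => by rw [h, hvrt] at hwt; omega
        obtain ⟨hcw, hcnt⟩ := hc w hwt
        rw [Function.update_of_ne hwv]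
        refine ⟨hcw, ?_⟩
        have hset : {u | G.Adj u w ∧ r u < r w ∧
              Function.update c v j u = σ s(u,w) * c w}
            = {u | G.Adj u w ∧ r u < r w ∧ c u = σ s(u,w) * c w} := by
          ext u
          simp only [Set.mem_setOf_eq]
          constructor
          · rintro ⟨h1, h2, h3⟩
            have huv : u ≠ v := fun h => by rw [h, hvrt] at h2; omega
            rw [Function.update_of_ne huv] at h3
            exact ⟨h1, h2, h3⟩
          · rintro ⟨h1, h2, h3⟩
            have huv : u ≠ v := fun h => by rw [h, hvrt] at h2; omega
            rw [Function.update_of_ne huv]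
            exact ⟨h1, h2, h3⟩
        rw [hset]
        exact hcnt
      · have hwv : w = v := by
          have : r w = t := by omega
          exact hrinj (by rw [this, hvrt])
        subst hwv
        rw [Function.update_self]
        refine ⟨hjL, ?_⟩
        have hset : {u | G.Adj u w ∧ r u < r w ∧
              Function.update c w j u = σ s(u,w) * j}
            = {u | (G.Adj u w ∧ r u < r w) ∧ σ s(u,w) * c u = j} := by
          ext u
          simp only [Set.mem_setOf_eq]
          constructor
          · rintro ⟨h1, h2, h3⟩
            have huv : u ≠ w := G.ne_of_adj h1
            rw [Function.update_of_ne huv] at h3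
            refine ⟨⟨h1, h2⟩, ?_⟩
            rw [h3, ← mul_assoc, sigma_invol hσ h1, one_mul]
          · rintro ⟨⟨h1, h2⟩, h3⟩
            have huv : u ≠ w := G.ne_of_adj h1
            rw [Function.update_of_ne huv]
            refine ⟨h1, h2, ?_⟩
            rw [← h3, ← mul_assoc, sigma_invol hσ h1, one_mul]
        rw [hset]
        exact hjcnt
    · push_neg at hvt
      refine ⟨c, fun v hv => hc v ?_⟩
      have := hvt v
      omega
end Color


/-- every edge-maximal `K₅`-minor-free graph with balanced signature has a
signed tree-coloring from any lists of size at least 3. -/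
theorem stmt5 {V : Type*} [Fintype V] (G : SimpleGraph V)
    (hG : EdgeMaximalK5MinorFree G)
    (σ : Sym2 V → ℤ) (hσ : IsSignature G σ) (hb : IsBalanced G σ)
    (L : V → Finset ℤ) (hL : ∀ v, 3 ≤ (L v).card) :
    ∃ c : V → ℤ, IsSignedTreeColoring G σ c ∧ ∀ v, c v ∈ L v := by
  classical
  have h5 : ¬ CMinor G 5 := fun h => hG.1 h
  obtain ⟨r, hrinj, hdeg⟩ := rank_exists G h5
  obtain ⟨c, hc⟩ := color_aux G σ hσ L hL r hrinj hdeg (Finset.univ.sup r + 1)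
  have hball : ∀ v : V, r v < Finset.univ.sup r + 1 := by
    intro v
    have : r v ≤ Finset.univ.sup r := Finset.le_sup (Finset.mem_univ v)
    omega
  refine ⟨c, ?_, fun v => (hc v (hball v)).1⟩
  intro u₀
  intro v w hw
  obtain ⟨m, hmw, hmmax⟩ := Finset.exists_max_image w.support.toFinset r
    ⟨v, List.mem_toFinset.mpr w.start_mem_support⟩
  have hmw' : m ∈ w.support := List.mem_toFinset.mp hmw
  have hrot := hw.rotate hmw'
  obtain ⟨a, b, hab, hma, hmb, haS, hbS⟩ := cycle_two_neighbors (w.rotate m hmw') hrot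
  -- a and b are in the original support
  have hsup : ∀ x, x ∈ (w.rotate m hmw').support → x ∈ w.support := by
    intro x hx
    rw [SimpleGraph.Walk.support_eq_cons] at hx
    rcases hx with _ | hx
    · exact hmw'
    · rename_i hx'
      have hperm := SimpleGraph.Walk.support_rotate w m hmw'
      have : x ∈ w.support.tail := hperm.mem_iff.mp hx'
      rw [SimpleGraph.Walk.support_eq_cons w]
      exact List.mem_cons_of_mem _ this
  have haw : a ∈ w.support := hsup a haS
  have hbw : b ∈ w.support := hsup b hbS
  -- both a and b are conflict neighbors of m
  have hconf : ∀ x, (signedSubgraph G σ c (c u₀)).Adj m x → x ∈ w.support →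
      x ∈ {u : V | G.Adj u m ∧ r u < r m ∧ c u = σ s(u,m) * c m} := by
    intro x hmx hxw
    obtain ⟨hGadj, hor, -, -⟩ := hmx
    have hxm : G.Adj x m := hGadj.symm
    have hrx : r x < r m := by
      have hle := hmmax x (List.mem_toFinset.mpr hxw)
      have hne : r x ≠ r m := fun h => (G.ne_of_adj hxm) (hrinj h)
      omega
    refine ⟨hxm, hrx, ?_⟩
    have hswap : s(x, m) = s(m, x) := Sym2.eq_swap
    rcases hor with h | h
    · -- c m = σ s(m,x) * c x
      rw [hswap]
      have := sigma_invol hσ hGadj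
      calc c x = 1 * c x := by ring
        _ = σ s(m,x) * σ s(m,x) * c x := by rw [this]
        _ = σ s(m,x) * (σ s(m,x) * c x) := by ring
        _ = σ s(m,x) * c m := by rw [← h]
    · rw [hswap]; exact h
  have hin_a := hconf a hma haw
  have hin_b := hconf b hmb hbw
  have h2le : 2 ≤ ({u : V | G.Adj u m ∧ r u < r m ∧ c u = σ s(u,m) * c m}).ncard := by
    have hsub : ({a, b} : Set V) ⊆ {u : V | G.Adj u m ∧ r u < r m ∧ c u = σ s(u,m) * c m} := by
      rintro x (rfl | hx)
      · exact hin_a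
      · rw [Set.mem_singleton_iff] at hx
        exact hx ▸ hin_b
    have hpair : ({a, b} : Set V).ncard = 2 := Set.ncard_pair hab
    calc 2 = ({a, b} : Set V).ncard := hpair.symm
      _ ≤ _ := Set.ncard_le_ncard hsub (Set.toFinite _)
  have := (hc m (hball m)).2
  omega
end Helpers
end
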